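/- arXiv:1401.5227 — 4 statements merged into one kernel-verified Lean document; each statement's English description precedes it below -/
import Mathlib

section
/- Let V be a 2k-dimensional real subspace of C^{n+1} and Π_V the orthogonal projection onto V. For x in the unit sphere S^{2n+1}, let vol(Π_V x ∧ Π_V Jx) denote the area of the parallelogram spanned by Π_V x and Π_V (Jx). Then ∫_{S^{2n+1}} vol(Π_V x ∧ Π_V Jx) dx ≤ ∫_{S^{2n+1}} ‖Π_V x‖² dx, with equality if and only if V is a complex subspace (i.e., JV = V). -/
open MeasureTheory Metric
open scoped RealInnerProductSpace

/-! Pointwise, AM–GM bounds the area by `(‖Π_V x‖² + ‖Π_V Jx‖²) / 2`, with equality exactly when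
`Π_V x` and `Π_V Jx` are orthogonal of equal length, and the `J`-invariance of `μ` turns the
integral of this bound into `∫ ‖Π_V x‖²`. Equality of the integrals forces the pointwise equality
almost everywhere, hence on the whole sphere, since the isometry group acts transitively on it and
`μ` is invariant. For a unit vector `x ∈ V` this says `‖Π_V Jx‖ = ‖Jx‖`, i.e. `Jx ∈ V`. -/

noncomputable def parallelogramArea {F : Type*} [NormedAddCommGroup F] [InnerProductSpace ℝ F]
    (u w : F) : ℝ :=
  √(‖u‖ ^ 2 * ‖w‖ ^ 2 - ⟪u, w⟫ ^ 2)

section parallelogramArea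

variable {F : Type*} [NormedAddCommGroup F] [InnerProductSpace ℝ F]

theorem parallelogramArea_le (u w : F) : parallelogramArea u w ≤ (‖u‖ ^ 2 + ‖w‖ ^ 2) / 2 :=
  Real.sqrt_le_iff.2 ⟨by positivity, by nlinarith [sq_nonneg (‖u‖ ^ 2 - ‖w‖ ^ 2), sq_nonneg ⟪u, w⟫]⟩

theorem parallelogramArea_eq_iff (u w : F) :
    parallelogramArea u w = (‖u‖ ^ 2 + ‖w‖ ^ 2) / 2 ↔ ‖u‖ = ‖w‖ ∧ ⟪u, w⟫ = 0 := by
  constructor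
  · intro h
    have hcs : ⟪u, w⟫ ^ 2 ≤ ‖u‖ ^ 2 * ‖w‖ ^ 2 := by
      rw [← mul_pow, ← sq_abs]
      exact pow_le_pow_left₀ (abs_nonneg _) (abs_real_inner_le_norm u w) 2
    have hsq : ((‖u‖ ^ 2 - ‖w‖ ^ 2) / 2) ^ 2 + ⟪u, w⟫ ^ 2 = 0 := by
      rw [parallelogramArea, Real.sqrt_eq_iff_eq_sq (by linarith) (by positivity)] at h
      linarith
    have hinner : ⟪u, w⟫ = 0 := by nlinarith [sq_nonneg ((‖u‖ ^ 2 - ‖w‖ ^ 2) / 2)]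
    refine ⟨(pow_left_inj₀ (norm_nonneg u) (norm_nonneg w) two_ne_zero).1 ?_, hinner⟩
    nlinarith [sq_nonneg ((‖u‖ ^ 2 - ‖w‖ ^ 2) / 2), sq_nonneg ⟪u, w⟫]
  · rintro ⟨hnorm, hinner⟩
    rw [parallelogramArea, hnorm, hinner,
      Real.sqrt_eq_iff_eq_sq (by ring_nf; positivity) (by positivity)]
    ring

@[fun_prop]
theorem Continuous.parallelogramArea {X : Type*} [TopologicalSpace X] {f g : X → F}
    (hf : Continuous f) (hg : Continuous g) :
    Continuous fun x => _root_.parallelogramArea (f x) (g x) := by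
  unfold _root_.parallelogramArea
  fun_prop

end parallelogramArea

section Projection

variable {E : Type*} [NormedAddCommGroup E] [InnerProductSpace ℝ E]

theorem real_inner_self_apply_eq_zero {J : E ≃ₗᵢ[ℝ] E} (hJ : ∀ x, J (J x) = -x) (u : E) :
    ⟪u, J u⟫ = 0 := by
  have h := J.inner_map_map u (J u)
  rw [hJ, inner_neg_right, real_inner_comm] at h
  linarith

theorem Submodule.starProjection_apply_of_map_eq (V : Submodule ℝ E) [V.HasOrthogonalProjection]
    {J : E ≃ₗᵢ[ℝ] E} (hJV : V.map (J.toLinearEquiv : E →ₗ[ℝ] E) = V) (x : E) :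
    V.starProjection (J x) = J (V.starProjection x) := by
  simpa only [hJV, J.symm_apply_apply] using V.starProjection_map_apply J (J x)

theorem Submodule.map_eq_of_forall_norm_eq_one [FiniteDimensional ℝ E] (V : Submodule ℝ E)
    (J : E ≃ₗ[ℝ] E) (h : ∀ v ∈ V, ‖v‖ = 1 → J v ∈ V) : V.map (J : E →ₗ[ℝ] E) = V := by
  refine Submodule.eq_of_le_of_finrank_eq ?_ (J.finrank_map_eq V)
  rintro _ ⟨v, hv, rfl⟩
  rcases eq_or_ne v 0 with rfl | hv0
  · simp
  have hunit : ‖‖v‖⁻¹ • v‖ = 1 := by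
    rw [norm_smul, norm_inv, norm_norm, inv_mul_cancel₀ (norm_ne_zero_iff.2 hv0)]
  have := V.smul_mem ‖v‖ (h _ (V.smul_mem _ hv) hunit)
  rwa [map_smul, smul_inv_smul₀ (norm_ne_zero_iff.2 hv0)] at this

end Projection

section InvariantMeasure

variable {E : Type*} [NormedAddCommGroup E] [InnerProductSpace ℝ E] [ProperSpace E]
  [MeasurableSpace E] [BorelSpace E] {μ : Measure E}

/-- An open null set meeting a sphere can be moved by reflections to cover a neighbourhood of
each point of the sphere. -/
theorem measure_sphere_eq_zero_of_isOpen_of_measure_eq_zero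
    (hinv : ∀ g : E ≃ₗᵢ[ℝ] E, μ.map g = μ) {U : Set E} (hU : IsOpen U) (hU0 : μ U = 0)
    {x : E} (hx : x ∈ U) : μ (sphere 0 ‖x‖) = 0 := by
  refine (isCompact_sphere 0 ‖x‖).measure_zero_of_nhdsWithin fun y hy => ?_
  set g := Submodule.reflection (ℝ ∙ (y - x))ᗮ
  have hgy : g y = x := Submodule.reflection_sub (by simpa using hy)
  refine ⟨g ⁻¹' U, mem_nhdsWithin_of_mem_nhds
    ((hU.preimage g.continuous).mem_nhds (by simpa [hgy])), ?_⟩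
  rw [← Measure.map_apply g.continuous.measurable hU.measurableSet, hinv, hU0]

theorem eqOn_sphere_of_ae_eq {β : Type*} [TopologicalSpace β] [T2Space β]
    (hinv : ∀ g : E ≃ₗᵢ[ℝ] E, μ.map g = μ) {r : ℝ} (hr : μ (sphere 0 r) ≠ 0) {f g : E → β}
    (hf : Continuous f) (hg : Continuous g) (hfg : f =ᵐ[μ] g) : Set.EqOn f g (sphere 0 r) := by
  intro x hx
  by_contra hne
  rw [← mem_sphere_zero_iff_norm.1 hx] at hr
  exact hr (measure_sphere_eq_zero_of_isOpen_of_measure_eq_zero hinv (isOpen_ne_fun hf hg)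
    (ae_iff.1 hfg) hne)

end InvariantMeasure

theorem Continuous.integrable_of_measure_compl_eq_zero {X : Type*} [TopologicalSpace X]
    [T2Space X] [MeasurableSpace X] [OpensMeasurableSpace X] {μ : Measure X} [IsFiniteMeasureOnCompacts μ]
    {K : Set X} (hK : IsCompact K) (hμK : μ Kᶜ = 0) {f : X → ℝ} (hf : Continuous f) :
    Integrable f μ := by
  have := hf.continuousOn.integrableOn_compact (μ := μ) hK
  rwa [IntegrableOn, Measure.restrict_eq_self_of_ae_mem (mem_ae_iff.2 hμK)] at this

theorem stmt_2_general (n : ℕ)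
    (J : EuclideanSpace ℝ (Fin (2 * n + 2)) ≃ₗᵢ[ℝ] EuclideanSpace ℝ (Fin (2 * n + 2)))
    (hJ : ∀ x, J (J x) = -x)
    (V : Submodule ℝ (EuclideanSpace ℝ (Fin (2 * n + 2))))
    (μ : Measure (EuclideanSpace ℝ (Fin (2 * n + 2)))) [IsFiniteMeasure μ] (hμ : μ ≠ 0)
    (hinv : ∀ g : EuclideanSpace ℝ (Fin (2 * n + 2)) ≃ₗᵢ[ℝ]
        EuclideanSpace ℝ (Fin (2 * n + 2)), μ.map g = μ)
    (hsphere : μ (Metric.sphere (0 : EuclideanSpace ℝ (Fin (2 * n + 2))) 1)ᶜ = 0) :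
    (∫ x, Real.sqrt (‖Submodule.orthogonalProjection V x‖ ^ 2 * ‖Submodule.orthogonalProjection V (J x)‖ ^ 2
          - (⟪Submodule.orthogonalProjection V x, Submodule.orthogonalProjection V (J x)⟫) ^ 2) ∂μ
        ≤ ∫ x, ‖Submodule.orthogonalProjection V x‖ ^ 2 ∂μ) ∧
    ((∫ x, Real.sqrt (‖Submodule.orthogonalProjection V x‖ ^ 2 * ‖Submodule.orthogonalProjection V (J x)‖ ^ 2
          - (⟪Submodule.orthogonalProjection V x, Submodule.orthogonalProjection V (J x)⟫) ^ 2) ∂μ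
        = ∫ x, ‖Submodule.orthogonalProjection V x‖ ^ 2 ∂μ)
      ↔ V.map (J.toLinearEquiv : EuclideanSpace ℝ (Fin (2 * n + 2)) →ₗ[ℝ]
          EuclideanSpace ℝ (Fin (2 * n + 2))) = V) := by
  set P := V.starProjection
  change (∫ x, parallelogramArea (P x) (P (J x)) ∂μ ≤ ∫ x, ‖P x‖ ^ 2 ∂μ) ∧
    (∫ x, parallelogramArea (P x) (P (J x)) ∂μ = ∫ x, ‖P x‖ ^ 2 ∂μ ↔ _)
  have hint {f : EuclideanSpace ℝ (Fin (2 * n + 2)) → ℝ} (hf : Continuous f) : Integrable f μ :=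
    hf.integrable_of_measure_compl_eq_zero (isCompact_sphere 0 1) hsphere
  have hmean : ∫ x, (‖P x‖ ^ 2 + ‖P (J x)‖ ^ 2) / 2 ∂μ = ∫ x, ‖P x‖ ^ 2 ∂μ := by
    rw [integral_div, integral_add (hint (by fun_prop)) (hint (by fun_prop)),
      (MeasurePreserving.mk J.continuous.measurable (hinv J)).integral_comp
        J.toHomeomorph.measurableEmbedding (fun x => ‖P x‖ ^ 2)]
    ring
  have hle x : parallelogramArea (P x) (P (J x)) ≤ (‖P x‖ ^ 2 + ‖P (J x)‖ ^ 2) / 2 :=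
    parallelogramArea_le _ _
  rw [← hmean]
  refine ⟨integral_mono (hint (by fun_prop)) (hint (by fun_prop)) hle, ?_⟩
  rw [integral_eq_iff_of_ae_le (hint (by fun_prop)) (hint (by fun_prop)) (.of_forall hle)]
  constructor
  · intro hae
    have hsphere_pos : μ (sphere 0 1) ≠ 0 := by
      rwa [measure_congr (ae_eq_univ.2 hsphere), Ne, Measure.measure_univ_eq_zero]
    have heq := eqOn_sphere_of_ae_eq hinv hsphere_pos (by fun_prop) (by fun_prop) hae
    refine V.map_eq_of_forall_norm_eq_one _ fun v hv hv1 => ?_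
    have hnorm := ((parallelogramArea_eq_iff _ _).1 (heq (by simpa using hv1))).1
    rwa [Submodule.starProjection_eq_self_iff.2 hv, ← J.norm_map v, eq_comm,
      ← Submodule.mem_iff_norm_starProjection] at hnorm
  · intro hJV
    refine .of_forall fun x => (parallelogramArea_eq_iff _ _).2 ?_
    rw [Submodule.starProjection_apply_of_map_eq V hJV, J.norm_map]
    exact ⟨rfl, real_inner_self_apply_eq_zero hJ _⟩

/-- For a `2k`-dimensional real subspace `V ⊆ ℂ^{n+1}` and the
rotation-invariant measure on `S^{2n+1}`,
`∫ vol(Π_V x ∧ Π_V Jx) dx ≤ ∫ ‖Π_V x‖² dx`, with equality iff `V` is a complex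
subspace (`JV = V`). Here `vol(u ∧ w) = √(‖u‖²‖w‖² - ⟨u,w⟩²)`. -/
theorem stmt_2 (n k : ℕ)
    (J : EuclideanSpace ℝ (Fin (2 * n + 2)) ≃ₗᵢ[ℝ] EuclideanSpace ℝ (Fin (2 * n + 2)))
    (hJ : ∀ x, J (J x) = -x)
    (V : Submodule ℝ (EuclideanSpace ℝ (Fin (2 * n + 2))))
    (hV : Module.finrank ℝ V = 2 * k)
    (μ : Measure (EuclideanSpace ℝ (Fin (2 * n + 2)))) [IsFiniteMeasure μ] (hμ : μ ≠ 0)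
    (hinv : ∀ g : EuclideanSpace ℝ (Fin (2 * n + 2)) ≃ₗᵢ[ℝ]
        EuclideanSpace ℝ (Fin (2 * n + 2)), μ.map g = μ)
    (hsphere : μ (Metric.sphere (0 : EuclideanSpace ℝ (Fin (2 * n + 2))) 1)ᶜ = 0) :
    (∫ x, Real.sqrt (‖Submodule.orthogonalProjection V x‖ ^ 2 * ‖Submodule.orthogonalProjection V (J x)‖ ^ 2
          - (⟪Submodule.orthogonalProjection V x, Submodule.orthogonalProjection V (J x)⟫) ^ 2) ∂μ
        ≤ ∫ x, ‖Submodule.orthogonalProjection V x‖ ^ 2 ∂μ) ∧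
    ((∫ x, Real.sqrt (‖Submodule.orthogonalProjection V x‖ ^ 2 * ‖Submodule.orthogonalProjection V (J x)‖ ^ 2
          - (⟪Submodule.orthogonalProjection V x, Submodule.orthogonalProjection V (J x)⟫) ^ 2) ∂μ
        = ∫ x, ‖Submodule.orthogonalProjection V x‖ ^ 2 ∂μ)
      ↔ V.map (J.toLinearEquiv : EuclideanSpace ℝ (Fin (2 * n + 2)) →ₗ[ℝ]
          EuclideanSpace ℝ (Fin (2 * n + 2))) = V) :=
  stmt_2_general n J hJ V μ hμ hinv hsphere
end

section
/- Let B_0, ..., B_{m-1} be positive semidefinite symmetric bilinear forms on R^q, each with all eigenvalues in [0,1], such that the sum of all their traces equals mp for an integer p ≤ q. Let B = B_0 + ... + B_{m-1}, with eigenvalues η_1, ..., η_q ∈ [0, m] satisfying η_1 + ... + η_q = mp. Then for m ≥ 3, the function F(η_1,...,η_q) = ∫_{S^{q-1}} (Σ_j η_j x_j²)^{m/2} dx (integration over the unit sphere with invariant measure, in coordinates diagonalizing B) satisfies F(η_1,...,η_q) ≤ F(m,...,m,0,...,0) where m appears p times. -/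
open MeasureTheory Finset

/-! The map `F(η) = ∫ (∑ⱼ ηⱼ xⱼ²)^{m/2} dμ` is convex on the nonnegative orthant, since
`t ↦ t^{m/2}` is convex for `m ≥ 2` and `η ↦ ∑ⱼ ηⱼ xⱼ²` is linear, and it is invariant under
permutations of the coordinates, which are isometries. The constraint set
`{η ∈ [0,m]^q | ∑ η = m p}` is a scaled hypersimplex. At one of its points, a coordinate
strictly between `0` and `m` forces a second one (the sum is a multiple of `m`), and mass can
be shifted between the two in both directions, so the extreme points are `{0,m}`-valued, i.e.
permutations of `(m,…,m,0,…,0)`. By Krein–Milman the hypersimplex is the convex hull of these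
finitely many points, and a convex function attains its maximum there at one of them. -/

section Hypersimplex

variable {ι : Type*} [Fintype ι]

def scaledHypersimplex (ι : Type*) [Fintype ι] (c : ℝ) (n : ℕ) : Set (ι → ℝ) :=
  {η | (∀ j, η j ∈ Set.Icc 0 c) ∧ ∑ j, η j = c * n}

lemma convex_scaledHypersimplex (c : ℝ) (n : ℕ) : Convex ℝ (scaledHypersimplex ι c n) := by
  rintro x ⟨hxI, hxs⟩ y ⟨hyI, hys⟩ a b ha hb hab
  refine ⟨fun j => ⟨?_, ?_⟩, ?_⟩
  · exact add_nonneg (mul_nonneg ha (hxI j).1) (mul_nonneg hb (hyI j).1)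
  · calc a * x j + b * y j ≤ a * c + b * c :=
          add_le_add (mul_le_mul_of_nonneg_left (hxI j).2 ha)
            (mul_le_mul_of_nonneg_left (hyI j).2 hb)
      _ = c := by rw [← add_mul, hab, one_mul]
  · simp only [Pi.add_apply, Pi.smul_apply, smul_eq_mul, sum_add_distrib, ← mul_sum, hxs, hys]
    linear_combination (c * n) * hab

lemma isCompact_scaledHypersimplex (c : ℝ) (n : ℕ) : IsCompact (scaledHypersimplex ι c n) := by
  have hclosed : IsClosed (scaledHypersimplex ι c n) := by
    rw [scaledHypersimplex, Set.ofPred_and, Set.ofPred_forall]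
    exact (isClosed_iInter fun j => isClosed_Icc.preimage (continuous_apply j)).inter
      (isClosed_eq (continuous_finsetSum _ fun j _ => continuous_apply j) continuous_const)
  exact (isCompact_univ_pi fun _ => isCompact_Icc).of_isClosed_subset hclosed
    fun η hη => Set.mem_univ_pi.2 hη.1

omit [Fintype ι] in
lemma sum_eq_card_mul_of_forall_eq_zero_or_eq [DecidableEq ι] {c : ℝ} {y : ι → ℝ} (s : Finset ι)
    (hy : ∀ j ∈ s, y j = 0 ∨ y j = c) : ∑ j ∈ s, y j = #{j ∈ s | y j = c} * c := by
  rw [← nsmul_eq_mul, ← sum_const, sum_filter]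
  exact sum_congr rfl fun j hj => by rcases hy j hj with h | h <;> simp [h]

lemma exists_ne_mem_Ioo_of_mem_scaledHypersimplex [DecidableEq ι] {c : ℝ} {n : ℕ} {η : ι → ℝ}
    (hη : η ∈ scaledHypersimplex ι c n) {i : ι} (hi : η i ∈ Set.Ioo 0 c) :
    ∃ k ≠ i, η k ∈ Set.Ioo 0 c := by
  by_contra! h
  have hval : ∀ k ∈ univ.erase i, η k = 0 ∨ η k = c := fun k hk => by
    have := h k (ne_of_mem_erase hk)
    rcases (hη.1 k).1.eq_or_lt with h0 | h0
    · exact Or.inl h0.symm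
    · exact Or.inr (le_antisymm (hη.1 k).2 (not_lt.1 fun hc => this ⟨h0, hc⟩))
  set t := #{k ∈ univ.erase i | η k = c}
  have hηi : η i = c * (n - t) := by
    have := add_sum_erase univ η (mem_univ i)
    rw [sum_eq_card_mul_of_forall_eq_zero_or_eq _ hval, hη.2] at this
    linear_combination this
  have hc : 0 < c := hi.1.trans hi.2
  have ht : (t : ℝ) < n := sub_pos.1 (pos_of_mul_pos_right (hηi ▸ hi.1) hc.le)
  have hn : (n : ℝ) < t + 1 := by
    have : c * (n - t) < c * 1 := by rw [← hηi, mul_one]; exact hi.2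
    linarith [lt_of_mul_lt_mul_left this hc.le]
  norm_cast at ht hn
  omega

lemma add_smul_single_sub_single_mem_scaledHypersimplex [DecidableEq ι] {c : ℝ} {n : ℕ}
    {η : ι → ℝ} (hη : η ∈ scaledHypersimplex ι c n) {j k : ι} (hkj : k ≠ j) {ε : ℝ}
    (hε : 0 ≤ ε) (hεj : ε ≤ min (η j) (c - η j)) (hεk : ε ≤ min (η k) (c - η k))
    {s : ℝ} (hs : |s| ≤ 1) :
    η + s • (Pi.single j ε - Pi.single k ε) ∈ scaledHypersimplex ι c n := by
  have hsε : |s * ε| ≤ ε := by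
    rw [abs_mul, abs_of_nonneg hε]; exact mul_le_of_le_one_left hε hs
  obtain ⟨hsε₁, hsε₂⟩ := abs_le.1 hsε
  obtain ⟨hεj₁, hεj₂⟩ := le_min_iff.1 hεj
  obtain ⟨hεk₁, hεk₂⟩ := le_min_iff.1 hεk
  refine ⟨fun l => ?_, ?_⟩
  · set v : ι → ℝ := Pi.single j ε - Pi.single k ε
    have hcoord : (η + s • v) l = η l + s * v l := rfl
    rcases eq_or_ne l j with rfl | hlj
    · have hvl : v l = ε := by simp [v, hkj.symm]
      rw [hcoord, hvl]; constructor <;> linarith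
    rcases eq_or_ne l k with rfl | hlk
    · have hvl : v l = -ε := by simp [v, hlj]
      rw [hcoord, hvl]; constructor <;> linarith
    · have hvl : v l = 0 := by simp [v, hlj, hlk]
      simpa [hcoord, hvl] using hη.1 l
  · simp [sum_add_distrib, ← mul_sum, hη.2]

lemma extremePoints_scaledHypersimplex_subset (c : ℝ) (n : ℕ) :
    (scaledHypersimplex ι c n).extremePoints ℝ ⊆ {η | ∀ j, η j = 0 ∨ η j = c} := by
  classical
  intro η hext j
  by_contra! hj
  have hS := hext.1
  have hj' : η j ∈ Set.Ioo 0 c :=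
    ⟨lt_of_le_of_ne (hS.1 j).1 (Ne.symm hj.1), lt_of_le_of_ne (hS.1 j).2 hj.2⟩
  obtain ⟨k, hkj, hk⟩ := exists_ne_mem_Ioo_of_mem_scaledHypersimplex hS hj'
  set ε := min (min (η j) (c - η j)) (min (η k) (c - η k))
  have hε : 0 < ε := by
    simp only [ε, lt_min_iff, sub_pos]
    exact ⟨hj', hk⟩
  set v : ι → ℝ := Pi.single j ε - Pi.single k ε
  have hmem : ∀ s : ℝ, |s| ≤ 1 → η + s • v ∈ scaledHypersimplex ι c n := fun s hs =>
    add_smul_single_sub_single_mem_scaledHypersimplex hS hkj hε.le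
      (min_le_left _ _) (min_le_right _ _) hs
  have hseg : η ∈ openSegment ℝ (η + (1 : ℝ) • v) (η + (-1 : ℝ) • v) :=
    ⟨1 / 2, 1 / 2, by norm_num, by norm_num, by norm_num, by module⟩
  have hext_eq :=
    (mem_extremePoints_iff_left.1 hext).2 _ (hmem 1 (by simp)) _ (hmem (-1) (by simp)) hseg
  have hvj := congrFun hext_eq j
  simp [v, hkj.symm] at hvj
  exact hε.ne' hvj

lemma scaledHypersimplex_subset_convexHull_extremePoints (c : ℝ) (n : ℕ) :
    scaledHypersimplex ι c n ⊆ convexHull ℝ ((scaledHypersimplex ι c n).extremePoints ℝ) := by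
  have hfin : ((scaledHypersimplex ι c n).extremePoints ℝ).Finite :=
    (Set.Finite.pi' fun _ => Set.toFinite ({0, c} : Set ℝ)).subset
      (extremePoints_scaledHypersimplex_subset c n)
  exact (closure_convexHull_extremePoints (isCompact_scaledHypersimplex c n)
    (convex_scaledHypersimplex c n)).symm.subset.trans
    (hfin.isCompact_convexHull ℝ).isClosed.closure_subset

lemma exists_perm_eq_comp_of_sum_eq {c : ℝ} (hc : c ≠ 0) {y z : ι → ℝ}
    (hy : ∀ j, y j = 0 ∨ y j = c) (hz : ∀ j, z j = 0 ∨ z j = c) (hyz : ∑ j, y j = ∑ j, z j) :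
    ∃ σ : Equiv.Perm ι, y = z ∘ σ := by
  classical
  have hcard : #{j | y j = c} = #{j | z j = c} := by
    rw [sum_eq_card_mul_of_forall_eq_zero_or_eq _ fun j _ => hy j,
      sum_eq_card_mul_of_forall_eq_zero_or_eq _ fun j _ => hz j] at hyz
    exact_mod_cast mul_right_cancel₀ hc hyz
  have := Set.powersetCard.isPretransitive (α := ι) (n := #{j | y j = c})
  obtain ⟨σ, hσ⟩ := MulAction.exists_smul_eq (Equiv.Perm ι)
    (⟨({j | y j = c} : Finset ι), rfl⟩ : Set.powersetCard ι _)
    ⟨({j | z j = c} : Finset ι), hcard.symm⟩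
  have hσ' := congrArg Subtype.val hσ
  simp only [Set.powersetCard.coe_smul] at hσ'
  refine ⟨σ, funext fun j => ?_⟩
  have hiff : y j = c ↔ z (σ j) = c := by
    have := Finset.smul_mem_smul_finset_iff (a := σ) (b := j) (s := ({j | y j = c} : Finset ι))
    rw [hσ'] at this
    simpa [Equiv.Perm.smul_def] using this.symm
  rcases hy j with h | h <;> rcases hz (σ j) with h' | h' <;> simp_all

end Hypersimplex

lemma Continuous.integrable_of_ae_mem_isCompact {X E : Type*} [TopologicalSpace X] [T2Space X]
    [MeasurableSpace X] [OpensMeasurableSpace X] [NormedAddCommGroup E] {μ : Measure X}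
    [IsFiniteMeasureOnCompacts μ] {K : Set X} (hK : IsCompact K) (hμK : ∀ᵐ x ∂μ, x ∈ K)
    {f : X → E} (hf : Continuous f) : Integrable f μ := by
  rw [← Measure.restrict_eq_self_of_ae_mem hμK]
  exact hf.continuousOn.integrableOn_compact hK

lemma convexOn_integral {α E : Type*} [MeasurableSpace α] {μ : Measure α} [AddCommGroup E]
    [Module ℝ E] {s : Set E} {g : E → α → ℝ} (hs : Convex ℝ s)
    (hg : ∀ x, ConvexOn ℝ s (g · x)) (hint : ∀ η ∈ s, Integrable (g η) μ) :
    ConvexOn ℝ s fun η => ∫ x, g η x ∂μ := by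
  refine ⟨hs, fun η₁ h₁ η₂ h₂ a b ha hb hab => ?_⟩
  have hi₁ := (hint η₁ h₁).const_mul a
  have hi₂ := (hint η₂ h₂).const_mul b
  calc ∫ x, g (a • η₁ + b • η₂) x ∂μ ≤ ∫ x, (a * g η₁ x + b * g η₂ x) ∂μ :=
        integral_mono (hint _ (hs h₁ h₂ ha hb hab)) (hi₁.add hi₂)
          fun x => (hg x).2 h₁ h₂ ha hb hab
    _ = a • ∫ x, g η₁ x ∂μ + b • ∫ x, g η₂ x ∂μ := by
        rw [integral_add hi₁ hi₂, integral_const_mul, integral_const_mul, smul_eq_mul,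
          smul_eq_mul]

section DiagonalForm

variable {ι : Type*} [Fintype ι] (μ : Measure (EuclideanSpace ℝ ι))

noncomputable def diagFormMoment (r : ℝ) (η : ι → ℝ) : ℝ :=
  ∫ x, (∑ j, η j * x j ^ 2) ^ r ∂μ

lemma convexOn_diagForm_rpow {r : ℝ} (hr : 1 ≤ r) (x : EuclideanSpace ℝ ι) :
    ConvexOn ℝ (Set.Ici 0) fun η : ι → ℝ => (∑ j, η j * x j ^ 2) ^ r := by
  have hlin : IsLinearMap ℝ fun η : ι → ℝ => ∑ j, η j * x j ^ 2 :=
    ⟨fun η₁ η₂ => by simp [add_mul, sum_add_distrib],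
      fun a η => by simp [mul_sum, mul_assoc]⟩
  refine ((convexOn_rpow hr).comp_linearMap hlin.mk').subset (fun η hη => ?_) (convex_Ici 0)
  exact sum_nonneg fun j _ => mul_nonneg (hη j) (sq_nonneg _)

lemma convexOn_diagFormMoment [IsFiniteMeasure μ] {K : Set (EuclideanSpace ℝ ι)}
    (hK : IsCompact K) (hμK : ∀ᵐ x ∂μ, x ∈ K) {r : ℝ} (hr : 1 ≤ r) :
    ConvexOn ℝ (Set.Ici 0) (diagFormMoment μ r) :=
  convexOn_integral (convex_Ici 0) (convexOn_diagForm_rpow hr) fun η _ =>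
    Continuous.integrable_of_ae_mem_isCompact hK hμK <|
      (by fun_prop : Continuous fun x : EuclideanSpace ℝ ι => ∑ j, η j * x j ^ 2).rpow_const
        fun _ => Or.inr (zero_le_one.trans hr)

lemma diagFormMoment_comp_perm
    (hμ : ∀ g : EuclideanSpace ℝ ι ≃ₗᵢ[ℝ] EuclideanSpace ℝ ι, μ.map g = μ)
    (r : ℝ) (η : ι → ℝ) (σ : Equiv.Perm ι) :
    diagFormMoment μ r (η ∘ σ) = diagFormMoment μ r η := by
  let g := LinearIsometryEquiv.piLpCongrLeft 2 ℝ ℝ σ.symm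
  have hg : MeasurePreserving g μ μ := ⟨g.continuous.measurable, hμ g⟩
  rw [diagFormMoment, diagFormMoment, ← hg.integral_comp g.toHomeomorph.measurableEmbedding]
  congr with x
  have hgx : ∀ j, g x j = x (σ j) := fun j => by
    simp [g, LinearIsometryEquiv.piLpCongrLeft_apply, Equiv.piCongrLeft']
  simp only [hgx, Function.comp_apply, Equiv.sum_comp σ fun j => η j * x j ^ 2]

end DiagonalForm

/-- Let `η₁, …, η_q ∈ [0,m]` with `Σ η_j = m·p` (as arises from the eigenvalues
of a sum `B = B₀ + ⋯ + B_{m-1}` of positive semidefinite forms with eigenvalues in `[0,1]`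
and total trace `m·p`), `p ≤ q`, `m ≥ 3`. Then for the rotation-invariant measure on
`S^{q-1}`, `F(η) = ∫ (Σ_j η_j x_j²)^{m/2} dx` satisfies
`F(η) ≤ F(m,…,m,0,…,0)` (with `m` appearing `p` times). -/
theorem stmt_3 (m p q : ℕ) (hm : 3 ≤ m) (hp : p ≤ q)
    (η : Fin q → ℝ) (hη : ∀ j, η j ∈ Set.Icc (0 : ℝ) m)
    (hsum : ∑ j, η j = m * p)
    (μ : Measure (EuclideanSpace ℝ (Fin q))) [IsFiniteMeasure μ]
    (hinv : ∀ g : EuclideanSpace ℝ (Fin q) ≃ₗᵢ[ℝ] EuclideanSpace ℝ (Fin q), μ.map g = μ)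
    (hsphere : μ (Metric.sphere (0 : EuclideanSpace ℝ (Fin q)) 1)ᶜ = 0) :
    ∫ x, (∑ j, η j * (x j) ^ 2) ^ ((m : ℝ) / 2) ∂μ
      ≤ ∫ x, (∑ j : Fin q, (if (j : ℕ) < p then (m : ℝ) else 0) * (x j) ^ 2)
          ^ ((m : ℝ) / 2) ∂μ := by
  have hr : (1 : ℝ) ≤ m / 2 := by
    have : (3 : ℝ) ≤ m := by exact_mod_cast hm
    linarith
  set target : Fin q → ℝ := fun j => if (j : ℕ) < p then (m : ℝ) else 0
  have htarget : ∀ j, target j = 0 ∨ target j = m := fun j => by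
    by_cases h : (j : ℕ) < p <;> simp [target, h]
  have hsum_target : ∑ j, target j = m * p := by
    simp [target, sum_ite, Fin.card_filter_val_lt, hp, mul_comm]
  have hconv : ConvexOn ℝ (scaledHypersimplex (Fin q) m p) (diagFormMoment μ (m / 2)) :=
    (convexOn_diagFormMoment μ (isCompact_sphere 0 1) (mem_ae_iff.2 hsphere) hr).subset
      (fun ζ hζ j => (hζ.1 j).1) (convex_scaledHypersimplex _ _)
  obtain ⟨y, hy, hηy⟩ := hconv.exists_ge_of_mem_convexHull extremePoints_subset
    (scaledHypersimplex_subset_convexHull_extremePoints _ _ ⟨hη, hsum⟩)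
  obtain ⟨σ, rfl⟩ := exists_perm_eq_comp_of_sum_eq (by exact_mod_cast (by omega : m ≠ 0))
    (extremePoints_scaledHypersimplex_subset _ _ hy) htarget (hy.1.2.trans hsum_target.symm)
  exact hηy.trans (diagFormMoment_comp_perm μ hinv _ target σ).le
end

section
/- The set of matrices g ∈ SO(l+m) such that g·R^k intersects R^{l-k} non-trivially (where R^k and R^{l-k} are fixed subspaces of R^{l+m} with k + (l-k) = l ≤ l+m) is contained in the zero set of a non-identically-zero polynomial function on SO(l+m); in particular it is a closed set with empty interior. -/
open Matrix
set_option maxHeartbeats 1000000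


open Matrix Finset Submodule

noncomputable section Stmt13Aux

variable {N d : ℕ}

lemma aux_vecMulVec_mul (a b c e : Fin N → ℝ) :
    vecMulVec a b * vecMulVec c e = (b ⬝ᵥ c) • vecMulVec a e := by
  ext i j
  simp only [Matrix.mul_apply, vecMulVec_apply, Matrix.smul_apply, dotProduct, smul_eq_mul,
    Finset.sum_mul]
  exact Finset.sum_congr rfl fun x _ => by ring

def MF (x y : Fin d → Fin N → ℝ) : Matrix (Fin N) (Fin N) ℝ := ∑ i, vecMulVec (x i) (y i)

lemma MF_mul_orth {x z : Fin d → Fin N → ℝ} (y t : Fin d → Fin N → ℝ)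
    (h : ∀ i j, y i ⬝ᵥ z j = if i = j then (1:ℝ) else 0) : MF x y * MF z t = MF x t := by
  simp only [MF, Finset.sum_mul, Finset.mul_sum, aux_vecMulVec_mul, h, ite_smul, one_smul,
    zero_smul, Finset.sum_ite_eq, Finset.sum_ite_eq', Finset.mem_univ, if_true]

lemma MF_mul_perp {y z : Fin d → Fin N → ℝ} (x t : Fin d → Fin N → ℝ)
    (h : ∀ i j, y i ⬝ᵥ z j = 0) : MF x y * MF z t = 0 := by
  simp only [MF, Finset.sum_mul, Finset.mul_sum, aux_vecMulVec_mul, h, zero_smul,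
    Finset.sum_const_zero]

lemma MF_transpose (x y : Fin d → Fin N → ℝ) : (MF x y)ᵀ = MF y x := by
  ext i j
  simp [MF, Matrix.sum_apply, vecMulVec_apply, Matrix.transpose_apply, mul_comm]

lemma MF_mulVec (x y : Fin d → Fin N → ℝ) (v : Fin N → ℝ) :
    MF x y *ᵥ v = ∑ i, (y i ⬝ᵥ v) • x i := by
  funext j
  simp only [MF, mulVec, dotProduct, Matrix.sum_apply, vecMulVec_apply, Finset.sum_apply,
    Pi.smul_apply, smul_eq_mul, Finset.sum_mul, Finset.mul_sum]
  rw [Finset.sum_comm]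
  exact Finset.sum_congr rfl fun i _ => Finset.sum_congr rfl fun p _ => by ring

lemma dot_sum (y : Fin N → ℝ) (f : Fin d → Fin N → ℝ) :
    y ⬝ᵥ (∑ i, f i) = ∑ i, y ⬝ᵥ f i := by
  simp only [dotProduct, Finset.sum_apply, Finset.mul_sum]
  exact Finset.sum_comm

lemma geom_lemma {N : ℕ} (V W : Submodule ℝ (Fin N → ℝ))
    (h : Module.finrank ℝ V + Module.finrank ℝ W ≤ N) :
    ∃ F : ℝ → Matrix (Fin N) (Fin N) ℝ, Continuous F ∧ F 0 = 1 ∧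
      (∀ θ, F θ ∈ Matrix.specialOrthogonalGroup (Fin N) ℝ) ∧
      ∀ θ, Real.sin θ ≠ 0 → (V.map (Matrix.mulVecLin (F θ))) ⊓ W = ⊥ := by
  classical
  let φ : EuclideanSpace ℝ (Fin N) ≃ₗ[ℝ] (Fin N → ℝ) := WithLp.linearEquiv 2 ℝ (Fin N → ℝ)
  have hdot : ∀ x y : EuclideanSpace ℝ (Fin N), φ x ⬝ᵥ φ y = (inner ℝ x y : ℝ) := by
    intro x y
    simp [dotProduct, PiLp.inner_apply, RCLike.inner_apply, conj_trivial, φ,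
      WithLp.linearEquiv_apply, mul_comm]
  set V' : Submodule ℝ (EuclideanSpace ℝ (Fin N)) := V.comap φ.toLinearMap with hV'def
  set W' : Submodule ℝ (EuclideanSpace ℝ (Fin N)) := W.comap φ.toLinearMap with hW'def
  have hV'r : Module.finrank ℝ V' = Module.finrank ℝ V := by
    rw [hV'def, Submodule.comap_equiv_eq_map_symm]
    exact LinearEquiv.finrank_map_eq _ _
  have hW'r : Module.finrank ℝ W' = Module.finrank ℝ W := by
    rw [hW'def, Submodule.comap_equiv_eq_map_symm]
    exact LinearEquiv.finrank_map_eq _ _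
  set d := Module.finrank ℝ ↥(V' ⊓ W') with hd_def
  have hdim : d ≤ Module.finrank ℝ ↥((V' ⊔ W')ᗮ) := by
    have h1 := Submodule.finrank_sup_add_finrank_inf_eq V' W'
    have h2 := Submodule.finrank_add_finrank_orthogonal (K := V' ⊔ W')
    have h3 : Module.finrank ℝ (EuclideanSpace ℝ (Fin N)) = N := finrank_euclideanSpace_fin
    omega
  let bb := stdOrthonormalBasis ℝ ↥(V' ⊓ W')
  let cc := stdOrthonormalBasis ℝ ↥((V' ⊔ W')ᗮ)
  let ι : Fin d → Fin (Module.finrank ℝ ↥((V' ⊔ W')ᗮ)) := Fin.castLE hdim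
  let u : Fin d → (Fin N → ℝ) := fun i => φ ((bb i : EuclideanSpace ℝ (Fin N)))
  let w : Fin d → (Fin N → ℝ) := fun i => φ ((cc (ι i) : EuclideanSpace ℝ (Fin N)))
  have hbbmem : ∀ i, ((bb i : EuclideanSpace ℝ (Fin N))) ∈ V' ⊔ W' :=
    fun i => Submodule.mem_sup_left (inf_le_left (a := V') (b := W') (bb i).2)
  have hu : ∀ i j, u i ⬝ᵥ u j = if i = j then (1:ℝ) else 0 := by
    intro i j
    rw [hdot, ← Submodule.coe_inner, orthonormal_iff_ite.mp bb.orthonormal i j]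
  have hw : ∀ i j, w i ⬝ᵥ w j = if i = j then (1:ℝ) else 0 := by
    intro i j
    rw [hdot, ← Submodule.coe_inner, orthonormal_iff_ite.mp cc.orthonormal (ι i) (ι j)]
    simp [ι, Fin.castLE_inj]
  have huw : ∀ i j, u i ⬝ᵥ w j = 0 := by
    intro i j
    rw [hdot]
    exact Submodule.inner_right_of_mem_orthogonal (hbbmem i) (cc (ι j)).2
  have hwu : ∀ i j, w i ⬝ᵥ u j = 0 := by
    intro i j; rw [dotProduct_comm]; exact huw j i
  set A := MF w u with hA
  set B := MF u w with hB
  set C := MF u u with hC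
  set D := MF w w with hD
  have hAA : A * A = 0 := MF_mul_perp _ _ huw
  have hAB : A * B = D := MF_mul_orth _ _ hu
  have hAC : A * C = A := MF_mul_orth _ _ hu
  have hAD : A * D = 0 := MF_mul_perp _ _ huw
  have hBA : B * A = C := MF_mul_orth _ _ hw
  have hBB : B * B = 0 := MF_mul_perp _ _ hwu
  have hBC : B * C = 0 := MF_mul_perp _ _ hwu
  have hBD : B * D = B := MF_mul_orth _ _ hw
  have hCA : C * A = 0 := MF_mul_perp _ _ huw
  have hCB : C * B = B := MF_mul_orth _ _ hu
  have hCC : C * C = C := MF_mul_orth _ _ hu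
  have hCD : C * D = 0 := MF_mul_perp _ _ huw
  have hDA : D * A = A := MF_mul_orth _ _ hw
  have hDB : D * B = 0 := MF_mul_perp _ _ hwu
  have hDC : D * C = 0 := MF_mul_perp _ _ hwu
  have hDD : D * D = D := MF_mul_orth _ _ hw
  set K := A - B with hK
  set L := -(C + D) with hL
  have hKK : K * K = L := by
    rw [hK, hL, sub_mul, mul_sub, mul_sub, hAA, hAB, hBA, hBB]; abel
  have hKL : K * L = -K := by
    rw [hK, hL, mul_neg, sub_mul, mul_add, mul_add, hAC, hAD, hBC, hBD]; abel
  have hLK : L * K = -K := by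
    rw [hK, hL, neg_mul, add_mul, mul_sub, mul_sub, hCA, hCB, hDA, hDB]; abel
  have hKt : Kᵀ = -K := by
    rw [hK, transpose_sub, MF_transpose, MF_transpose]; abel
  have hLt : Lᵀ = L := by
    rw [hL, transpose_neg, transpose_add, MF_transpose, MF_transpose]
  have hLL : L * L = -L := by
    rw [hL, neg_mul_neg, add_mul, mul_add, mul_add, hCC, hCD, hDC, hDD]; abel
  set F : ℝ → Matrix (Fin N) (Fin N) ℝ :=
    fun θ => 1 + Real.sin θ • K + (1 - Real.cos θ) • L with hF
  have hFt : ∀ θ, (F θ)ᵀ = 1 - Real.sin θ • K + (1 - Real.cos θ) • L := by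
    intro θ
    rw [hF]
    simp only [transpose_add, transpose_smul, transpose_one, hKt, hLt, smul_neg]
    abel
  have hmul : ∀ θ, (F θ)ᵀ * F θ = 1 := by
    intro θ
    rw [hFt, hF]
    have pyth := Real.sin_sq_add_cos_sq θ
    simp only [mul_add, add_mul, sub_mul, mul_sub, one_mul, mul_one, smul_mul_assoc,
      mul_smul_comm, hKK, hKL, hLK, hLL, smul_smul]
    match_scalars <;> nlinarith [pyth]
  have hmul' : ∀ θ, F θ * (F θ)ᵀ = 1 := by
    intro θ
    rw [hFt, hF]
    have pyth := Real.sin_sq_add_cos_sq θ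
    simp only [mul_add, add_mul, sub_mul, mul_sub, one_mul, mul_one, smul_mul_assoc,
      mul_smul_comm, hKK, hKL, hLK, hLL, smul_smul]
    match_scalars <;> nlinarith [pyth]
  have hF0 : F 0 = 1 := by
    rw [hF]; simp
  have hFcont : Continuous F := by
    rw [hF]
    exact (continuous_const.add (Real.continuous_sin.smul continuous_const)).add
      ((continuous_const.sub Real.continuous_cos).smul continuous_const)
  have hdet2 : ∀ θ, F θ * F θ * 1 = F θ * F θ → True := fun _ _ => trivial
  have hdetsq : ∀ θ, Matrix.det (F θ) * Matrix.det (F θ) = 1 := by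
    intro θ
    have := congrArg Matrix.det (hmul θ)
    rwa [Matrix.det_mul, Matrix.det_transpose, Matrix.det_one] at this
  have hdet1 : ∀ θ, Matrix.det (F θ) = 1 := by
    intro θ
    rcases mul_self_eq_one_iff.mp (hdetsq θ) with h1 | h1
    · exact h1
    · exfalso
      have hcd : Continuous fun θ => Matrix.det (F θ) := hFcont.matrix_det
      have hiv := intermediate_value_uIcc (a := 0) (b := θ)
        (f := fun θ => Matrix.det (F θ)) hcd.continuousOn
      have h0 : (0:ℝ) ∈ Set.uIcc (Matrix.det (F 0)) (Matrix.det (F θ)) := by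
        rw [hF0, Matrix.det_one, h1]
        simp [Set.mem_uIcc]
      obtain ⟨t, _, ht⟩ := hiv h0
      have := hdetsq t
      rw [show Matrix.det (F t) = 0 from ht] at this
      norm_num at this
  have hmem : ∀ θ, F θ ∈ Matrix.specialOrthogonalGroup (Fin N) ℝ := by
    intro θ
    rw [Matrix.mem_specialOrthogonalGroup_iff]
    refine ⟨?_, hdet1 θ⟩
    rw [Matrix.mem_orthogonalGroup_iff]
    exact hmul' θ
  refine ⟨F, hFcont, hF0, hmem, ?_⟩
  intro θ hθ
  rw [eq_bot_iff]
  intro x hx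
  obtain ⟨hx1, hxW⟩ := Submodule.mem_inf.mp hx
  obtain ⟨v, hv, rfl⟩ := Submodule.mem_map.mp hx1
  rw [Matrix.mulVecLin_apply] at hxW ⊢
  have hperp : ∀ (y : Fin N → ℝ), y ∈ V ⊔ W → ∀ i, w i ⬝ᵥ y = 0 := by
    intro y hy i
    have hsup : V' ⊔ W' = (V ⊔ W).comap φ.toLinearMap := by
      rw [hV'def, hW'def, Submodule.comap_equiv_eq_map_symm, Submodule.comap_equiv_eq_map_symm,
        Submodule.comap_equiv_eq_map_symm, Submodule.map_sup]
    have hy' : φ.symm y ∈ V' ⊔ W' := by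
      rw [hsup]
      exact Submodule.mem_comap.mpr (by simpa using hy)
    have h0 : (inner ℝ ((cc (ι i) : EuclideanSpace ℝ (Fin N))) (φ.symm y) : ℝ) = 0 :=
      Submodule.inner_left_of_mem_orthogonal hy' (cc (ι i)).2
    have hh := hdot ((cc (ι i) : EuclideanSpace ℝ (Fin N))) (φ.symm y)
    rw [φ.apply_symm_apply] at hh
    exact hh.trans h0
  set a : Fin d → ℝ := fun i => u i ⬝ᵥ v with ha_def
  have hwv : ∀ i, w i ⬝ᵥ v = 0 := fun i => hperp v (Submodule.mem_sup_left hv) i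
  have hKv : K *ᵥ v = ∑ i, a i • w i := by
    rw [hK, Matrix.sub_mulVec, MF_mulVec, MF_mulVec]
    simp [hwv, ha_def]
  have hLv : L *ᵥ v = -∑ i, a i • u i := by
    rw [hL, Matrix.neg_mulVec, Matrix.add_mulVec, MF_mulVec, MF_mulVec]
    simp [hwv, ha_def]
  have hxv : F θ *ᵥ v
      = v + Real.sin θ • ∑ i, a i • w i + (1 - Real.cos θ) • -∑ i, a i • u i := by
    rw [hF, Matrix.add_mulVec, Matrix.add_mulVec, Matrix.one_mulVec,
      Matrix.smul_mulVec, Matrix.smul_mulVec, hKv, hLv]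
  have ha0 : ∀ j, a j = 0 := by
    intro j
    have h1 : w j ⬝ᵥ (F θ *ᵥ v) = 0 := hperp _ (Submodule.mem_sup_right hxW) j
    rw [hxv] at h1
    simp only [dotProduct_add, dotProduct_smul, dotProduct_neg,
      dot_sum, hw, hwu, hwv, smul_eq_mul, mul_ite, mul_one, mul_zero,
      Finset.sum_ite_eq, Finset.sum_ite_eq', Finset.mem_univ, if_true,
      Finset.sum_const_zero, add_zero, zero_add, mul_neg, neg_zero] at h1
    rcases mul_eq_zero.mp h1 with h | h
    · exact absurd h hθ
    · exact h
  have hxv' : F θ *ᵥ v = v := by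
    rw [hxv]
    simp [ha0]
  have hvW : v ∈ W := by rwa [hxv'] at hxW
  have hvmem : φ.symm v ∈ V' ⊓ W' := by
    refine Submodule.mem_inf.mpr ⟨?_, ?_⟩
    · rw [hV'def]; exact Submodule.mem_comap.mpr (by simpa using hv)
    · rw [hW'def]; exact Submodule.mem_comap.mpr (by simpa using hvW)
  have hcoef : ∀ i, (inner (𝕜 := ℝ) (bb i) (⟨φ.symm v, hvmem⟩ : ↥(V' ⊓ W')) : ℝ) = 0 := by
    intro i
    rw [Submodule.coe_inner]
    have hh := hdot ((bb i : EuclideanSpace ℝ (Fin N))) (φ.symm v)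
    rw [φ.apply_symm_apply] at hh
    rw [← hh]
    exact ha0 i
  have hvv0 : (⟨φ.symm v, hvmem⟩ : ↥(V' ⊓ W')) = 0 := by
    rw [← bb.sum_repr' ⟨φ.symm v, hvmem⟩]
    simp only [hcoef, zero_smul, Finset.sum_const_zero]
  have hv0 : v = 0 := by
    have h2 : φ.symm v = 0 := congrArg Subtype.val hvv0
    have := congrArg φ h2
    rwa [φ.apply_symm_apply, map_zero] at this
  rw [hxv', hv0]
  exact Submodule.zero_mem ⊥

lemma indep_iff_minor {l N : ℕ} (c : Fin l → (Fin N → ℝ)) :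
    LinearIndependent ℝ c ↔ ∃ ρ : Fin l → Fin N,
      (Matrix.of fun i j => c j (ρ i)).det ≠ 0 := by
  constructor
  · intro hc
    set A : Matrix (Fin N) (Fin l) ℝ := Matrix.of fun i j => c j i with hA
    have hAt : LinearIndependent ℝ (fun j => Aᵀ j) := hc
    have hrank : A.rank = l := by
      have : Aᵀ.rank = Fintype.card (Fin l) := hAt.rank_matrix
      rwa [Matrix.rank_transpose, Fintype.card_fin] at this
    have hspan : (Set.range fun i : Fin N => A i).finrank ℝ = l := by
      have := A.rank_eq_finrank_span_row
      rw [hrank] at this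
      exact this.symm
    obtain ⟨b, hbsub, hbspan, hbind⟩ :=
      exists_linearIndependent ℝ (Set.range fun i : Fin N => A i)
    have hbfin : b.Finite := hbind.finite
    haveI := hbfin.fintype
    have hcard : Fintype.card b = l := by
      have h1 := linearIndependent_iff_card_eq_finrank_span.mp hbind
      rw [Subtype.range_coe] at h1
      rw [h1]
      unfold Set.finrank
      rw [hbspan]
      exact hspan
    let e : Fin l ≃ b := (Fintype.equivFinOfCardEq hcard).symm
    have hsel : ∀ i : Fin l, ∃ i0 : Fin N, A i0 = (e i : Fin l → ℝ) := by
      intro i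
      exact hbsub (e i).2
    choose ρ hρ using hsel
    refine ⟨ρ, ?_⟩
    have hrows : LinearIndependent ℝ (fun i : Fin l => (Matrix.of fun i j => c j (ρ i)) i) := by
      have h2 : (fun i : Fin l => (Matrix.of fun i j => c j (ρ i)) i)
          = (fun x : b => (x : Fin l → ℝ)) ∘ e := by
        funext i
        exact hρ i
      rw [h2]
      exact hbind.comp e e.injective
    have := Matrix.linearIndependent_rows_iff_isUnit.mp hrows
    exact isUnit_iff_ne_zero.mp ((Matrix.isUnit_iff_isUnit_det _).mp this)
  · rintro ⟨ρ, hρ⟩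
    have hM : IsUnit (Matrix.of fun i j => c j (ρ i)) :=
      (Matrix.isUnit_iff_isUnit_det _).mpr (isUnit_iff_ne_zero.mpr hρ)
    have hcols := Matrix.linearIndependent_cols_iff_isUnit.mpr hM
    have h2 : (Matrix.of fun i j => c j (ρ i)).col
        = (LinearMap.funLeft ℝ ℝ ρ) ∘ c := by
      funext j
      rfl
    rw [h2] at hcols
    exact hcols.of_comp _

namespace Stmt13

variable {l m k : ℕ}

/-- the embedding Fin l → Fin (l+m) -/
abbrev emb (l m : ℕ) : Fin l → Fin (l + m) := Fin.castLE (Nat.le_add_right l m)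

lemma emb_inj : Function.Injective (emb l m) := Fin.castLE_injective _

/-- the `l`-family of columns -/
def cfam (l m k : ℕ) (g : Matrix (Fin (l+m)) (Fin (l+m)) ℝ) : Fin l → (Fin (l+m) → ℝ) :=
  fun j => if (j : ℕ) < k then g *ᵥ Pi.single (emb l m j) 1 else Pi.single (emb l m j) 1

def RkS (l m k : ℕ) : Submodule ℝ (Fin (l + m) → ℝ) :=
  Submodule.span ℝ {x | ∃ i : Fin (l + m), (i : ℕ) < k ∧ x = Pi.single i 1}

def RlkS (l m k : ℕ) : Submodule ℝ (Fin (l + m) → ℝ) :=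
  Submodule.span ℝ {x | ∃ i : Fin (l + m), k ≤ (i : ℕ) ∧ (i : ℕ) < l ∧ x = Pi.single i 1}

lemma memRk_coords (hk : k ≤ l) {v : Fin (l+m) → ℝ} (hv : v ∈ RkS l m k) :
    ∀ i : Fin (l+m), k ≤ (i : ℕ) → v i = 0 := by
  induction hv using Submodule.span_induction with
  | mem x hx =>
    obtain ⟨i0, hi0, rfl⟩ := hx
    intro i hi
    rw [Pi.single_apply]
    rw [if_neg]
    rintro rfl
    omega
  | zero => intro i _; rfl
  | add x y _ _ hx hy => intro i hi; simp [hx i hi, hy i hi]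
  | smul a x _ hx => intro i hi; simp [hx i hi]

lemma memRlk_coords {x : Fin (l+m) → ℝ} (hx : x ∈ RlkS l m k) :
    ∀ i : Fin (l+m), ((i : ℕ) < k ∨ l ≤ (i : ℕ)) → x i = 0 := by
  induction hx using Submodule.span_induction with
  | mem y hy =>
    obtain ⟨i0, hi0, hi0', rfl⟩ := hy
    intro i hi
    rw [Pi.single_apply, if_neg]
    rintro rfl
    omega
  | zero => intro i _; rfl
  | add x y _ _ hx hy => intro i hi; simp [hx i hi, hy i hi]
  | smul a x _ hx => intro i hi; simp [hx i hi]

lemma recon {v : Fin (l+m) → ℝ} (hv : ∀ i : Fin (l+m), l ≤ (i : ℕ) → v i = 0) :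
    v = ∑ j : Fin l, v (emb l m j) • (Pi.single (emb l m j) (1:ℝ) : Fin (l+m) → ℝ) := by
  funext i
  rw [Finset.sum_apply]
  rcases lt_or_ge (i : ℕ) l with hi | hi
  · set j0 : Fin l := ⟨(i : ℕ), hi⟩ with hj0
    have hij0 : emb l m j0 = i := by
      apply Fin.ext
      rfl
    rw [Finset.sum_eq_single j0]
    · rw [hij0, Pi.smul_apply, Pi.single_apply, if_pos rfl, smul_eq_mul, mul_one]
    · intro j _ hj
      rw [Pi.smul_apply, Pi.single_apply, if_neg, smul_eq_mul, mul_zero]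
      rw [← hij0]
      exact fun h => hj (emb_inj h.symm)
    · intro h
      exact absurd (Finset.mem_univ j0) h
  · rw [hv i hi]
    symm
    apply Finset.sum_eq_zero
    intro j _
    rw [Pi.smul_apply, Pi.single_apply, if_neg, smul_eq_mul, mul_zero]
    intro h
    have : (i : ℕ) = (j : ℕ) := by rw [h]; rfl
    omega

lemma coords_of_sum (co : Fin l → ℝ) (j0 : Fin l) :
    (∑ j : Fin l, co j • (Pi.single (emb l m j) (1:ℝ) : Fin (l+m) → ℝ)) (emb l m j0) = co j0 := by
  rw [Finset.sum_apply, Finset.sum_eq_single j0]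
  · rw [Pi.smul_apply, Pi.single_apply, if_pos rfl, smul_eq_mul, mul_one]
  · intro j _ hj
    rw [Pi.smul_apply, Pi.single_apply, if_neg, smul_eq_mul, mul_zero]
    exact fun h => hj (emb_inj h).symm
  · intro h
    exact absurd (Finset.mem_univ j0) h

lemma inf_eq_bot_iff_indep (hk : k ≤ l) (g : Matrix (Fin (l+m)) (Fin (l+m)) ℝ) (hg : IsUnit g) :
    ((RkS l m k).map g.mulVecLin ⊓ RlkS l m k = ⊥) ↔ LinearIndependent ℝ (cfam l m k g) := by
  have hginj : Function.Injective g.mulVec := Matrix.mulVec_injective_iff_isUnit.mpr hg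
  have hsingleRk : ∀ j : Fin l, (j:ℕ) < k →
      (Pi.single (emb l m j) (1:ℝ) : Fin (l+m) → ℝ) ∈ RkS l m k := by
    intro j hj
    exact Submodule.subset_span ⟨emb l m j, hj, rfl⟩
  have hsingleRlk : ∀ j : Fin l, k ≤ (j:ℕ) →
      (Pi.single (emb l m j) (1:ℝ) : Fin (l+m) → ℝ) ∈ RlkS l m k := by
    intro j hj
    exact Submodule.subset_span ⟨emb l m j, hj, j.2, rfl⟩
  constructor
  · intro hbot
    rw [Fintype.linearIndependent_iff]
    intro t ht
    set v : Fin (l+m) → ℝ := ∑ j : Fin l,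
      (if (j:ℕ) < k then t j else 0) • (Pi.single (emb l m j) (1:ℝ) : Fin (l+m) → ℝ) with hvdef
    set wv : Fin (l+m) → ℝ := ∑ j : Fin l,
      (if (j:ℕ) < k then 0 else t j) • (Pi.single (emb l m j) (1:ℝ) : Fin (l+m) → ℝ) with hwdef
    have hgv : g *ᵥ v = ∑ j : Fin l,
        (if (j:ℕ) < k then t j else 0) • (g *ᵥ (Pi.single (emb l m j) (1:ℝ) : Fin (l+m) → ℝ)) := by
      rw [hvdef, ← Matrix.mulVecLin_apply, map_sum]
      simp only [_root_.map_smul, Matrix.mulVecLin_apply, Matrix.mulVec_smul]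
    have hsplit : g *ᵥ v + wv = 0 := by
      rw [hgv, hwdef, ← Finset.sum_add_distrib, ← ht]
      apply Finset.sum_congr rfl
      intro j _
      by_cases hj : (j:ℕ) < k
      · simp [cfam, hj]
      · simp [cfam, hj]
    have hvmem : v ∈ RkS l m k := by
      apply Submodule.sum_mem
      intro j _
      by_cases hj : (j:ℕ) < k
      · exact Submodule.smul_mem _ _ (hsingleRk j hj)
      · rw [if_neg hj, zero_smul]; exact Submodule.zero_mem _
    have hwmem : wv ∈ RlkS l m k := by
      apply Submodule.sum_mem
      intro j _
      by_cases hj : (j:ℕ) < k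
      · rw [if_pos hj, zero_smul]; exact Submodule.zero_mem _
      · exact Submodule.smul_mem _ _ (hsingleRlk j (not_lt.mp hj))
    have hxmem : g *ᵥ v ∈ (RkS l m k).map g.mulVecLin ⊓ RlkS l m k := by
      refine Submodule.mem_inf.mpr ⟨Submodule.mem_map.mpr ⟨v, hvmem, rfl⟩, ?_⟩
      rw [eq_neg_of_add_eq_zero_left hsplit]
      exact Submodule.neg_mem _ hwmem
    rw [hbot] at hxmem
    have hgv0 : g *ᵥ v = 0 := (Submodule.mem_bot ℝ).mp hxmem
    have hv0 : v = 0 := hginj (by rw [hgv0, Matrix.mulVec_zero])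
    have hw0 : wv = 0 := by
      have := hsplit
      rw [hgv0, zero_add] at this
      exact this
    intro j
    by_cases hj : (j:ℕ) < k
    · have h2 := coords_of_sum (l:=l) (m:=m) (fun j' => if ((j':Fin l):ℕ) < k then t j' else 0) j
      rw [← hvdef, hv0] at h2
      rw [if_pos hj] at h2
      simpa using h2.symm
    · have h2 := coords_of_sum (l:=l) (m:=m) (fun j' => if ((j':Fin l):ℕ) < k then 0 else t j') j
      rw [← hwdef, hw0] at h2
      rw [if_neg hj] at h2
      simpa using h2.symm
  · intro hind
    rw [eq_bot_iff]
    rintro x hx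
    obtain ⟨hx1, hxRlk⟩ := Submodule.mem_inf.mp hx
    obtain ⟨v, hvRk, rfl⟩ := Submodule.mem_map.mp hx1
    rw [Matrix.mulVecLin_apply] at hxRlk ⊢
    have hveq := recon (l:=l) (m:=m) (v := v)
      (fun i hi => memRk_coords hk hvRk i (hk.trans hi))
    have hxeq := recon (l:=l) (m:=m) (v := g *ᵥ v)
      (fun i hi => memRlk_coords hxRlk i (Or.inr hi))
    have hvz : ∀ j : Fin l, ¬((j:ℕ) < k) → v (emb l m j) = 0 :=
      fun j hj => memRk_coords hk hvRk _ (not_lt.mp hj)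
    have hxz : ∀ j : Fin l, (j:ℕ) < k → (g *ᵥ v) (emb l m j) = 0 :=
      fun j hj => memRlk_coords hxRlk _ (Or.inl hj)
    set t : Fin l → ℝ := fun j => if (j:ℕ) < k then v (emb l m j) else -(g *ᵥ v) (emb l m j)
      with htdef
    have hterm : ∀ j : Fin l, t j • cfam l m k g j
        = g *ᵥ (v (emb l m j) • (Pi.single (emb l m j) (1:ℝ) : Fin (l+m) → ℝ))
          - (g *ᵥ v) (emb l m j) • (Pi.single (emb l m j) (1:ℝ) : Fin (l+m) → ℝ) := by
      intro j
      by_cases hj : (j:ℕ) < k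
      · simp [htdef, cfam, hj, hxz j hj, Matrix.mulVec_smul]
      · simp [htdef, cfam, hj, hvz j hj, neg_smul]
    have hsum : ∑ j : Fin l, t j • cfam l m k g j = 0 := by
      rw [Finset.sum_congr rfl (fun j _ => hterm j), Finset.sum_sub_distrib]
      have h3 : ∑ j : Fin l, g *ᵥ (v (emb l m j) • (Pi.single (emb l m j) (1:ℝ) : Fin (l+m) → ℝ))
          = g *ᵥ v := by
        simp only [← Matrix.mulVecLin_apply]
        rw [← map_sum]
        congr 1
        exact hveq.symm
      rw [h3, ← hxeq, sub_self]
    have ht0 := Fintype.linearIndependent_iff.mp hind t hsum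
    have hx0 : g *ᵥ v = 0 := by
      nth_rewrite 1 [hxeq]
      apply Finset.sum_eq_zero
      intro j _
      by_cases hj : (j:ℕ) < k
      · rw [hxz j hj, zero_smul]
      · have h4 := ht0 j
        rw [htdef] at h4
        simp only [if_neg hj, neg_eq_zero] at h4
        rw [h4, zero_smul]
    rw [hx0]
    exact Submodule.zero_mem ⊥

noncomputable def Pol (l m k : ℕ) : MvPolynomial (Fin (l+m) × Fin (l+m)) ℝ :=
  ∑ ρ : Fin l → Fin (l+m),
    (Matrix.det (Matrix.of fun i j : Fin l =>
      if (j:ℕ) < k then MvPolynomial.X (ρ i, emb l m j)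
      else MvPolynomial.C ((Pi.single (emb l m j) (1:ℝ) : Fin (l+m) → ℝ) (ρ i))))^2

lemma eval_Pol (g : Matrix (Fin (l+m)) (Fin (l+m)) ℝ) :
    MvPolynomial.eval (fun ij => g ij.1 ij.2) (Pol l m k)
      = ∑ ρ : Fin l → Fin (l+m),
          (Matrix.det (Matrix.of fun i j => cfam l m k g j (ρ i)))^2 := by
  rw [Pol, map_sum]
  apply Finset.sum_congr rfl
  intro ρ _
  rw [map_pow]
  congr 1
  rw [RingHom.map_det]
  congr 1
  ext i j
  by_cases hj : (j:ℕ) < k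
  · simp [hj, cfam, Matrix.mulVec_single]
  · simp [hj, cfam]

lemma Pol_zero_iff (g : Matrix (Fin (l+m)) (Fin (l+m)) ℝ) :
    MvPolynomial.eval (fun ij => g ij.1 ij.2) (Pol l m k) = 0
      ↔ ∀ ρ : Fin l → Fin (l+m), (Matrix.of fun i j => cfam l m k g j (ρ i)).det = 0 := by
  rw [eval_Pol, Finset.sum_eq_zero_iff_of_nonneg (fun ρ _ => sq_nonneg _)]
  simp [pow_eq_zero_iff]

lemma bad_iff_eval_zero (hk : k ≤ l) (g : Matrix (Fin (l+m)) (Fin (l+m)) ℝ) (hg : IsUnit g) :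
    ((RkS l m k).map g.mulVecLin ⊓ RlkS l m k ≠ ⊥)
      ↔ MvPolynomial.eval (fun ij => g ij.1 ij.2) (Pol l m k) = 0 := by
  rw [Ne, inf_eq_bot_iff_indep hk g hg, indep_iff_minor, Pol_zero_iff]
  push_neg
  rfl

lemma finrank_bound (hk : k ≤ l) (g : Matrix (Fin (l+m)) (Fin (l+m)) ℝ) :
    Module.finrank ℝ ((RkS l m k).map g.mulVecLin) + Module.finrank ℝ (RlkS l m k) ≤ l + m := by
  have hkn : k ≤ l + m := hk.trans (Nat.le_add_right l m)
  have hRk : RkS l m k = Submodule.span ℝ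
      (Set.range fun j : Fin k => (Pi.single (⟨(j:ℕ), lt_of_lt_of_le j.2 hkn⟩ : Fin (l+m)) (1:ℝ) :
        Fin (l+m) → ℝ)) := by
    unfold RkS
    congr 1
    ext x
    constructor
    · rintro ⟨i, hi, rfl⟩
      exact ⟨⟨(i:ℕ), hi⟩, by congr⟩
    · rintro ⟨j, rfl⟩
      exact ⟨⟨(j:ℕ), lt_of_lt_of_le j.2 hkn⟩, j.2, rfl⟩
  have hRlk : RlkS l m k = Submodule.span ℝ
      (Set.range fun j : Fin (l - k) => (Pi.single (⟨k + (j:ℕ), by have := j.2; omega⟩ : Fin (l+m)) (1:ℝ) :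
        Fin (l+m) → ℝ)) := by
    unfold RlkS
    congr 1
    ext x
    constructor
    · rintro ⟨i, hi1, hi2, rfl⟩
      refine ⟨⟨(i:ℕ) - k, by omega⟩, ?_⟩
      have hfin : (⟨k + ((i:ℕ) - k), by omega⟩ : Fin (l+m)) = i := by
        apply Fin.ext
        show k + ((i:ℕ) - k) = (i:ℕ)
        omega
      simp only []
      rw [hfin]
    · rintro ⟨j, rfl⟩
      refine ⟨⟨k + (j:ℕ), by have := j.2; omega⟩, by show k ≤ k + (j:ℕ); omega,
        by show k + (j:ℕ) < l; have := j.2; omega, rfl⟩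
  have h1 : Module.finrank ℝ ((RkS l m k).map g.mulVecLin) ≤ k := by
    rw [hRk, Submodule.map_span, ← Set.range_comp]
    have := finrank_range_le_card (R := ℝ)
      (fun j : Fin k => g.mulVecLin ((Pi.single (⟨(j:ℕ), lt_of_lt_of_le j.2 hkn⟩ : Fin (l+m)) (1:ℝ) :
        Fin (l+m) → ℝ)))
    simpa [Set.finrank, Function.comp_def] using this
  have h2 : Module.finrank ℝ (RlkS l m k) ≤ l - k := by
    rw [hRlk]
    have := finrank_range_le_card (R := ℝ)
      (fun j : Fin (l - k) => (Pi.single (⟨k + (j:ℕ), by have := j.2; omega⟩ : Fin (l+m)) (1:ℝ) :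
        Fin (l+m) → ℝ))
    simpa [Set.finrank] using this
  omega

end Stmt13



/-- The set of `g ∈ SO(l+m)` such that `g·ℝ^k` meets `ℝ^{l-k}` nontrivially
(`ℝ^k = span(e₁,…,e_k)`, `ℝ^{l-k} = span(e_{k+1},…,e_l)`, `k ≤ l ≤ l+m`) is contained in
the zero set of a polynomial in the matrix entries that is not identically zero on
`SO(l+m)`; in particular it is closed with empty interior in `SO(l+m)`. -/
theorem stmt_13 (l m k : ℕ) (hk : k ≤ l) :
    let Rk : Submodule ℝ (Fin (l + m) → ℝ) :=
      Submodule.span ℝ {x | ∃ i : Fin (l + m), (i : ℕ) < k ∧ x = Pi.single i 1}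
    let Rlk : Submodule ℝ (Fin (l + m) → ℝ) :=
      Submodule.span ℝ {x | ∃ i : Fin (l + m), k ≤ (i : ℕ) ∧ (i : ℕ) < l ∧ x = Pi.single i 1}
    let bad : Set (Matrix.specialOrthogonalGroup (Fin (l + m)) ℝ) :=
      {g | (Rk.map (Matrix.mulVecLin (g : Matrix (Fin (l + m)) (Fin (l + m)) ℝ))) ⊓ Rlk ≠ ⊥}
    (∃ P : MvPolynomial (Fin (l + m) × Fin (l + m)) ℝ,
      (∃ g : Matrix.specialOrthogonalGroup (Fin (l + m)) ℝ,
        MvPolynomial.eval (fun ij => (g : Matrix (Fin (l + m)) (Fin (l + m)) ℝ) ij.1 ij.2) P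
          ≠ 0) ∧
      (∀ g : Matrix.specialOrthogonalGroup (Fin (l + m)) ℝ, g ∈ bad →
        MvPolynomial.eval (fun ij => (g : Matrix (Fin (l + m)) (Fin (l + m)) ℝ) ij.1 ij.2) P
          = 0)) ∧
    IsClosed bad ∧ interior bad = ∅ := by
  intro Rk Rlk bad
  have hunit : ∀ g : Matrix.specialOrthogonalGroup (Fin (l+m)) ℝ,
      IsUnit (g : Matrix (Fin (l+m)) (Fin (l+m)) ℝ) := by
    intro g
    have hdet : (g : Matrix (Fin (l+m)) (Fin (l+m)) ℝ).det = 1 :=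
      (Matrix.mem_specialOrthogonalGroup_iff.mp g.2).2
    exact (Matrix.isUnit_iff_isUnit_det _).mpr (by rw [hdet]; exact isUnit_one)
  have hbadiff : ∀ g : Matrix.specialOrthogonalGroup (Fin (l+m)) ℝ,
      (g ∈ bad ↔ MvPolynomial.eval
        (fun ij => (g : Matrix (Fin (l+m)) (Fin (l+m)) ℝ) ij.1 ij.2) (Stmt13.Pol l m k) = 0) := by
    intro g
    exact Stmt13.bad_iff_eval_zero hk _ (hunit g)
  have hbad_eq : bad = (fun g : Matrix.specialOrthogonalGroup (Fin (l+m)) ℝ =>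
      MvPolynomial.eval (fun ij => (g : Matrix (Fin (l+m)) (Fin (l+m)) ℝ) ij.1 ij.2)
        (Stmt13.Pol l m k)) ⁻¹' {0} := by
    ext g
    rw [Set.mem_preimage, Set.mem_singleton_iff]
    exact hbadiff g
  have hcont : Continuous (fun g : Matrix.specialOrthogonalGroup (Fin (l+m)) ℝ =>
      MvPolynomial.eval (fun ij => (g : Matrix (Fin (l+m)) (Fin (l+m)) ℝ) ij.1 ij.2)
        (Stmt13.Pol l m k)) := by
    apply (MvPolynomial.continuous_eval (Stmt13.Pol l m k)).comp
    exact continuous_pi fun ij =>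
      (continuous_apply ij.2).comp ((continuous_apply ij.1).comp continuous_subtype_val)
  refine ⟨⟨Stmt13.Pol l m k, ⟨1, ?_⟩, fun g hg => (hbadiff g).mp hg⟩, ?_, ?_⟩
  · -- nonvanishing at the identity
    intro h0
    have hone : ((1 : Matrix.specialOrthogonalGroup (Fin (l+m)) ℝ) :
        Matrix (Fin (l+m)) (Fin (l+m)) ℝ) = 1 := rfl
    rw [hone] at h0
    have hind : LinearIndependent ℝ
        (Stmt13.cfam l m k (1 : Matrix (Fin (l+m)) (Fin (l+m)) ℝ)) := by
      have hceq : Stmt13.cfam l m k (1 : Matrix (Fin (l+m)) (Fin (l+m)) ℝ)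
          = fun j => (Pi.single (Stmt13.emb l m j) (1:ℝ) : Fin (l+m) → ℝ) := by
        funext j
        by_cases hj : (j:ℕ) < k
        · simp only [Stmt13.cfam, if_pos hj, Matrix.one_mulVec]
        · simp [Stmt13.cfam, hj]
      rw [hceq]
      have hb := (Pi.basisFun ℝ (Fin (l+m))).linearIndependent
      have hcomp := hb.comp (Stmt13.emb l m) Stmt13.emb_inj
      have : ((Pi.basisFun ℝ (Fin (l+m)) : _) ∘ Stmt13.emb l m)
          = fun j => (Pi.single (Stmt13.emb l m j) (1:ℝ) : Fin (l+m) → ℝ) := by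
        funext j
        simp [Function.comp, Pi.basisFun_apply]
      rwa [this] at hcomp
    obtain ⟨ρ, hρ⟩ := (indep_iff_minor _).mp hind
    exact hρ ((Stmt13.Pol_zero_iff 1).mp h0 ρ)
  · rw [hbad_eq]
    exact isClosed_singleton.preimage hcont
  · rw [interior_eq_empty_iff_dense_compl]
    intro g
    obtain ⟨F, hFc, hF0, hFmem, hFinf⟩ := geom_lemma
      ((Stmt13.RkS l m k).map (g : Matrix (Fin (l+m)) (Fin (l+m)) ℝ).mulVecLin)
      (Stmt13.RlkS l m k) (Stmt13.finrank_bound hk _)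
    set seq : ℕ → Matrix.specialOrthogonalGroup (Fin (l+m)) ℝ :=
      fun j => ⟨F (1/(j+1)) * (g : Matrix (Fin (l+m)) (Fin (l+m)) ℝ),
        mul_mem (hFmem _) g.2⟩ with hseq
    have htseq : Filter.Tendsto (fun j : ℕ => (1:ℝ)/(j+1)) Filter.atTop (nhds 0) :=
      tendsto_one_div_add_atTop_nhds_zero_nat
    have hFt : Filter.Tendsto (fun j : ℕ => F (1/(j+1))) Filter.atTop (nhds 1) := by
      have := (hFc.tendsto 0).comp htseq
      rwa [hF0] at this
    have hmulc : Continuous (fun M : Matrix (Fin (l+m)) (Fin (l+m)) ℝ =>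
        M * (g : Matrix (Fin (l+m)) (Fin (l+m)) ℝ)) :=
      continuous_id.matrix_mul continuous_const
    have htend : Filter.Tendsto seq Filter.atTop (nhds g) := by
      rw [Topology.IsEmbedding.subtypeVal.tendsto_nhds_iff]
      have := (hmulc.tendsto 1).comp hFt
      rw [one_mul] at this
      exact this
    have hgood : ∀ j : ℕ, seq j ∈ badᶜ := by
      intro j
      simp only [Set.mem_compl_iff]
      intro hmem
      refine hmem ?_
      show (Rk.map (Matrix.mulVecLin _)) ⊓ Rlk = ⊥
      have hcoe : ((seq j : Matrix (Fin (l+m)) (Fin (l+m)) ℝ))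
          = F (1/(j+1)) * (g : Matrix (Fin (l+m)) (Fin (l+m)) ℝ) := rfl
      rw [hcoe, Matrix.mulVecLin_mul, Submodule.map_comp]
      apply hFinf
      have hpos : 0 < (1:ℝ)/(j+1) := by positivity
      have hle : (1:ℝ)/(j+1) ≤ 1 := by
        rw [div_le_one (by positivity)]
        have : (0:ℝ) ≤ j := Nat.cast_nonneg j
        linarith
      have hlt : (1:ℝ)/(j+1) < Real.pi := lt_of_le_of_lt hle
        (by linarith [Real.pi_gt_three])
      exact ne_of_gt (Real.sin_pos_of_pos_of_lt_pi hpos hlt)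
    exact mem_closure_of_tendsto htend (Filter.Eventually.of_forall hgood)
end Stmt13Aux
end

section
/- Let μ be a rotation-invariant probability measure on the unit sphere S^{2n-1} ⊂ R^{2n} = C^n with complex structure J, and let v₁, v₂ be orthonormal vectors with v₂ ⊥ {v₁, Jv₁}. Define a₁(x) = ⟨x, v₁⟩, b₁(x) = ⟨x, Jv₁⟩, a₂(x) = ⟨x, v₂⟩, b₂(x) = ⟨x, Jv₂⟩. Then for any τ, ∫ |(a₁² + b₁²) cos τ + (a₂ b₁ - a₁ b₂) sin τ| dμ ≤ ∫ (a₁² + b₁²) dμ, with equality iff cos τ = ±1 (up to sign conventions, τ = 0 mod π). -/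
/-!
Put `U = cos τ • v₁ - sin τ • J v₂`, a unit vector because `v₁ ⊥ J v₂`. The integrand is
`a₁ u + b₁ w` with `u = ⟪x, U⟫`, `w = ⟪x, J U⟫`, so it is bounded by `(a₁² + b₁² + u² + w²) / 2`.
For an isometry-invariant measure the second moment `∫ ⟪x, e⟫²` depends only on `‖e‖`, and
integrating the bound gives the inequality.

In case of equality the defect of this bound vanishes a.e., which forces
`⟪x, v₁ - U⟫ * ⟪x, v₁ + U⟫ = 0` a.e. An invariant measure not concentrated at the origin cannot
live on the union of two orthogonal hyperplanes: pulling back by a reflection that turns them by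
`π / 4` gives `⟪x, y⟫ ^ 2 = ⟪x, z⟫ ^ 2` a.e. as well, so `⟪x, y⟫ = 0` a.e., and by invariance every
coordinate of `x` vanishes a.e. Hence `U = ± v₁`, i.e. `cos τ = ± 1`.
-/

open MeasureTheory
open scoped RealInnerProductSpace

theorem abs_mul_add_mul_le (a b u w : ℝ) :
    |a * u + b * w| ≤ (a ^ 2 + b ^ 2 + u ^ 2 + w ^ 2) / 2 := by
  rw [abs_le]
  constructor <;>
    nlinarith [sq_nonneg (a + u), sq_nonneg (b + w), sq_nonneg (a - u), sq_nonneg (b - w)]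

theorem mul_sub_add_eq_zero_of_abs_mul_add_mul_eq {a b u w : ℝ}
    (h : |a * u + b * w| = (a ^ 2 + b ^ 2 + u ^ 2 + w ^ 2) / 2) : (a - u) * (a + u) = 0 := by
  rcases abs_cases (a * u + b * w) with ⟨h', -⟩ | ⟨h', -⟩
  · have : (a - u) ^ 2 + (b - w) ^ 2 = 0 := by linear_combination -2 * h + 2 * h'
    have : a - u = 0 := by nlinarith [sq_nonneg (a - u), sq_nonneg (b - w)]
    rw [this, zero_mul]
  · have : (a + u) ^ 2 + (b + w) ^ 2 = 0 := by linear_combination -2 * h + 2 * h'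
    have : a + u = 0 := by nlinarith [sq_nonneg (a + u), sq_nonneg (b + w)]
    rw [this, mul_zero]

section
variable {E : Type*} [NormedAddCommGroup E] [InnerProductSpace ℝ E]

theorem exists_linearIsometryEquiv_inner_eq {u w : E} (h : ‖u‖ = ‖w‖) :
    ∃ g : E ≃ₗᵢ[ℝ] E, ∀ x, ⟪g x, u⟫ = ⟪x, w⟫ :=
  ⟨(ℝ ∙ (u - w))ᗮ.reflection, fun x => by
    rw [LinearIsometryEquiv.inner_map_eq_flip, Submodule.reflection_symm,
      Submodule.reflection_sub h]⟩

variable [MeasurableSpace E] [BorelSpace E] {μ : Measure E}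

theorem ae_comp_of_map_eq {g : E ≃ₗᵢ[ℝ] E} (hg : μ.map g = μ) {p : E → Prop}
    (h : ∀ᵐ x ∂μ, p x) : ∀ᵐ x ∂μ, p (g x) :=
  ae_of_ae_map g.continuous.aemeasurable (by rwa [hg])

theorem integral_comp_of_map_eq {g : E ≃ₗᵢ[ℝ] E} (hg : μ.map g = μ) (f : E → ℝ) :
    ∫ x, f (g x) ∂μ = ∫ x, f x ∂μ :=
  MeasurePreserving.integral_comp' (f := g.toHomeomorph.toMeasurableEquiv)
    ⟨g.continuous.measurable, hg⟩ f

theorem integrable_inner_sq (h2 : Integrable (fun x => ‖x‖ ^ 2) μ) (u : E) :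
    Integrable (fun x => ⟪x, u⟫ ^ 2) μ := by
  refine (h2.const_mul (‖u‖ ^ 2)).mono' (by fun_prop) (ae_of_all _ fun x => ?_)
  rw [norm_pow, mul_comm, ← mul_pow]
  exact pow_le_pow_left₀ (norm_nonneg _) (norm_inner_le_norm x u) 2

theorem integrable_sum_sq_div_two (h2 : Integrable (fun x => ‖x‖ ^ 2) μ) {v v' U U' : E} :
    Integrable (fun x => (⟪x, v⟫ ^ 2 + ⟪x, v'⟫ ^ 2 + ⟪x, U⟫ ^ 2 + ⟪x, U'⟫ ^ 2) / 2) μ :=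
  have hi := integrable_inner_sq h2
  (((hi v).add (hi v')).add (hi U)).add (hi U') |>.div_const 2

variable (hinv : ∀ g : E ≃ₗᵢ[ℝ] E, μ.map g = μ)
include hinv

theorem integral_inner_sq_eq_of_norm_eq {u w : E} (h : ‖u‖ = ‖w‖) :
    ∫ x, ⟪x, u⟫ ^ 2 ∂μ = ∫ x, ⟪x, w⟫ ^ 2 ∂μ := by
  obtain ⟨g, hg⟩ := exists_linearIsometryEquiv_inner_eq h
  simp_rw [← hg]
  exact (integral_comp_of_map_eq (hinv g) fun x => ⟪x, u⟫ ^ 2).symm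

theorem ae_inner_eq_zero_of_norm_eq {u w : E} (h : ‖u‖ = ‖w‖)
    (hu : ∀ᵐ x ∂μ, ⟪x, u⟫ = 0) : ∀ᵐ x ∂μ, ⟪x, w⟫ = 0 := by
  obtain ⟨g, hg⟩ := exists_linearIsometryEquiv_inner_eq h
  simpa only [hg] using ae_comp_of_map_eq (hinv g) hu

theorem ae_eq_zero_of_ae_inner_eq_zero [FiniteDimensional ℝ E] {y : E} (hy : y ≠ 0)
    (h : ∀ᵐ x ∂μ, ⟪x, y⟫ = 0) : ∀ᵐ x ∂μ, x = 0 := by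
  let b := stdOrthonormalBasis ℝ E
  have hb : ∀ i, ∀ᵐ x ∂μ, ⟪x, b i⟫ = 0 := fun i => by
    have hnorm : ‖y‖ = ‖‖y‖ • b i‖ := by
      rw [norm_smul, b.orthonormal.1 i, norm_norm, mul_one]
    filter_upwards [ae_inner_eq_zero_of_norm_eq hinv hnorm h] with x hx
    rw [inner_smul_right] at hx
    exact (mul_eq_zero.1 hx).resolve_left (norm_ne_zero_iff.2 hy)
  filter_upwards [ae_all_iff.2 hb] with x hx
  rw [← inner_self_eq_zero (𝕜 := ℝ), ← b.sum_inner_mul_inner x x]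
  simp [hx]

theorem ae_inner_eq_zero_of_ae_inner_mul_inner_eq_zero {y z : E} (hyz : ⟪y, z⟫ = 0)
    (hnorm : ‖y‖ = ‖z‖) (h : ∀ᵐ x ∂μ, ⟪x, y⟫ * ⟪x, z⟫ = 0) : ∀ᵐ x ∂μ, ⟪x, y⟫ = 0 := by
  set r := √2
  have hr : r * r⁻¹ = 1 := mul_inv_cancel₀ (by positivity)
  have hr2 : r⁻¹ ^ 2 = 1 / 2 := by rw [inv_pow, Real.sq_sqrt zero_le_two, one_div]
  set y' := r⁻¹ • (y + z)
  have hy' : ‖y‖ = ‖y'‖ := by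
    refine (pow_left_inj₀ (norm_nonneg _) (norm_nonneg _) two_ne_zero).1 ?_
    rw [norm_smul, mul_pow, norm_add_sq_real, hyz, ← hnorm, Real.norm_eq_abs, sq_abs, hr2]
    ring
  set ρ := (ℝ ∙ (y - y'))ᗮ.reflection
  have hρy : ρ y = y' := Submodule.reflection_sub hy'
  have hρz : ρ z = r • y - y' := by
    have hz : z = r • y' - y := by
      rw [smul_smul, hr, one_smul]; abel
    rw [hz, map_sub, map_smul, hρy, ← hρy, Submodule.reflection_reflection]
  -- `ρ` sends `y, z` to `(y + z) / √2, (y - z) / √2`, so the pulled-back product is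
  -- `(⟪x, y⟫² - ⟪x, z⟫²) / 2`
  filter_upwards [h, ae_comp_of_map_eq (hinv ρ) h] with x hprod hρyz
  rw [ρ.inner_map_eq_flip, ρ.inner_map_eq_flip, Submodule.reflection_symm, hρy, hρz] at hρyz
  simp only [y', inner_sub_right, inner_smul_right, inner_add_right] at hρyz
  have hsq : (⟪x, y⟫ + ⟪x, z⟫) * (⟪x, y⟫ - ⟪x, z⟫) = 0 := by
    linear_combination 2 * hρyz - 2 * (⟪x, y⟫ + ⟪x, z⟫) * ⟪x, y⟫ * hr
      + 2 * (⟪x, y⟫ + ⟪x, z⟫) ^ 2 * hr2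
  have h4 : ⟪x, y⟫ ^ 4 = 0 := by
    linear_combination ⟪x, y⟫ ^ 2 * hsq + ⟪x, y⟫ * ⟪x, z⟫ * hprod
  exact pow_eq_zero_iff four_ne_zero |>.1 h4

theorem not_ae_inner_mul_inner_eq_zero [FiniteDimensional ℝ E] (hμ : ¬∀ᵐ x ∂μ, x = 0)
    {y z : E} (hy : y ≠ 0) (hz : z ≠ 0) (hyz : ⟪y, z⟫ = 0) :
    ¬∀ᵐ x ∂μ, ⟪x, y⟫ * ⟪x, z⟫ = 0 := by
  intro h
  set k := ‖y‖ / ‖z‖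
  have hnorm : ‖y‖ = ‖k • z‖ := by
    rw [norm_smul, Real.norm_of_nonneg (by positivity), div_mul_cancel₀ _ (norm_ne_zero_iff.2 hz)]
  have hyz' : ⟪y, k • z⟫ = 0 := by rw [inner_smul_right, hyz, mul_zero]
  have hk : ∀ᵐ x ∂μ, ⟪x, y⟫ * ⟪x, k • z⟫ = 0 := h.mono fun x hx => by
    rw [inner_smul_right, mul_left_comm, hx, mul_zero]
  exact hμ <| ae_eq_zero_of_ae_inner_eq_zero hinv hy <|
    ae_inner_eq_zero_of_ae_inner_mul_inner_eq_zero hinv hyz' hnorm hk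

variable (h2 : Integrable (fun x => ‖x‖ ^ 2) μ) {v v' U U' : E}
include h2

theorem integral_sum_sq_div_two_eq (hU : ‖U‖ = ‖v‖) (hU' : ‖U'‖ = ‖v'‖) :
    ∫ x, (⟪x, v⟫ ^ 2 + ⟪x, v'⟫ ^ 2 + ⟪x, U⟫ ^ 2 + ⟪x, U'⟫ ^ 2) / 2 ∂μ
      = ∫ x, (⟪x, v⟫ ^ 2 + ⟪x, v'⟫ ^ 2) ∂μ := by
  have hi := integrable_inner_sq h2
  have hvv' : Integrable (fun x => ⟪x, v⟫ ^ 2 + ⟪x, v'⟫ ^ 2) μ := (hi v).add (hi v')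
  have hvv'U : Integrable (fun x => ⟪x, v⟫ ^ 2 + ⟪x, v'⟫ ^ 2 + ⟪x, U⟫ ^ 2) μ := hvv'.add (hi U)
  rw [integral_div, integral_add hvv'U (hi U'), integral_add hvv' (hi U),
    integral_add (hi v) (hi v'), integral_inner_sq_eq_of_norm_eq hinv hU,
    integral_inner_sq_eq_of_norm_eq hinv hU']
  ring

theorem integral_abs_inner_mul_inner_add_le (hU : ‖U‖ = ‖v‖) (hU' : ‖U'‖ = ‖v'‖) :
    ∫ x, |⟪x, v⟫ * ⟪x, U⟫ + ⟪x, v'⟫ * ⟪x, U'⟫| ∂μ ≤ ∫ x, (⟪x, v⟫ ^ 2 + ⟪x, v'⟫ ^ 2) ∂μ := by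
  rw [← integral_sum_sq_div_two_eq hinv h2 hU hU']
  exact integral_mono_of_nonneg (ae_of_all _ fun x => abs_nonneg _) (integrable_sum_sq_div_two h2)
    (ae_of_all _ fun x => abs_mul_add_mul_le _ _ _ _)

theorem eq_or_eq_neg_of_integral_abs_inner_mul_inner_add_eq [FiniteDimensional ℝ E]
    (hμ : ¬∀ᵐ x ∂μ, x = 0) (hU : ‖U‖ = ‖v‖) (hU' : ‖U'‖ = ‖v'‖)
    (heq : ∫ x, |⟪x, v⟫ * ⟪x, U⟫ + ⟪x, v'⟫ * ⟪x, U'⟫| ∂μ = ∫ x, (⟪x, v⟫ ^ 2 + ⟪x, v'⟫ ^ 2) ∂μ) :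
    U = v ∨ U = -v := by
  have hmaj := integrable_sum_sq_div_two (v := v) (v' := v') (U := U) (U' := U') h2
  have habs : Integrable (fun x => |⟪x, v⟫ * ⟪x, U⟫ + ⟪x, v'⟫ * ⟪x, U'⟫|) μ :=
    hmaj.mono' (by fun_prop) (ae_of_all _ fun x => by
      rw [Real.norm_eq_abs, abs_abs]; exact abs_mul_add_mul_le _ _ _ _)
  have hdefect := (integral_eq_zero_iff_of_nonneg
    (fun x => sub_nonneg.2 (abs_mul_add_mul_le ⟪x, v⟫ ⟪x, v'⟫ ⟪x, U⟫ ⟪x, U'⟫))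
    (hmaj.sub habs)).1 (by
      rw [integral_sub hmaj habs, integral_sum_sq_div_two_eq hinv h2 hU hU', heq, sub_self])
  have hprod : ∀ᵐ x ∂μ, ⟪x, v - U⟫ * ⟪x, v + U⟫ = 0 := hdefect.mono fun x hx => by
    rw [inner_sub_right, inner_add_right]
    exact mul_sub_add_eq_zero_of_abs_mul_add_mul_eq (sub_eq_zero.1 hx).symm
  by_contra hne
  push Not at hne
  refine not_ae_inner_mul_inner_eq_zero hinv hμ (sub_ne_zero.2 hne.1.symm)
    (fun h => hne.2 (eq_neg_of_add_eq_zero_right h)) ?_ hprod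
  rw [real_inner_comm, real_inner_add_sub_eq_zero_iff, hU]

end

theorem stmt_18_general (n : ℕ)
    (J : EuclideanSpace ℝ (Fin (2 * n)) ≃ₗᵢ[ℝ] EuclideanSpace ℝ (Fin (2 * n)))
    (hJ : ∀ x, J (J x) = -x)
    (v₁ v₂ : EuclideanSpace ℝ (Fin (2 * n)))
    (hv₁ : ‖v₁‖ = 1) (hv₂ : ‖v₂‖ = 1)
    (hJ12 : ⟪J v₁, v₂⟫ = 0)
    (μ : Measure (EuclideanSpace ℝ (Fin (2 * n)))) [IsProbabilityMeasure μ]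
    (hinv : ∀ g : EuclideanSpace ℝ (Fin (2 * n)) ≃ₗᵢ[ℝ] EuclideanSpace ℝ (Fin (2 * n)),
      μ.map g = μ)
    (hsphere : μ (Metric.sphere (0 : EuclideanSpace ℝ (Fin (2 * n))) 1)ᶜ = 0)
    (τ : ℝ) :
    (∫ x, |(⟪x, v₁⟫ ^ 2 + ⟪x, J v₁⟫ ^ 2) * Real.cos τ
          + (⟪x, v₂⟫ * ⟪x, J v₁⟫ - ⟪x, v₁⟫ * ⟪x, J v₂⟫) * Real.sin τ| ∂μ
        ≤ ∫ x, (⟪x, v₁⟫ ^ 2 + ⟪x, J v₁⟫ ^ 2) ∂μ) ∧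
    ((∫ x, |(⟪x, v₁⟫ ^ 2 + ⟪x, J v₁⟫ ^ 2) * Real.cos τ
          + (⟪x, v₂⟫ * ⟪x, J v₁⟫ - ⟪x, v₁⟫ * ⟪x, J v₂⟫) * Real.sin τ| ∂μ
        = ∫ x, (⟪x, v₁⟫ ^ 2 + ⟪x, J v₁⟫ ^ 2) ∂μ)
      ↔ (Real.cos τ = 1 ∨ Real.cos τ = -1)) := by
  have hsph : ∀ᵐ x ∂μ, ‖x‖ = 1 :=
    (show ∀ᵐ x ∂μ, x ∈ Metric.sphere 0 1 from mem_ae_iff.2 hsphere).mono fun x hx =>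
      mem_sphere_zero_iff_norm.1 hx
  have h2 : Integrable (fun x => ‖x‖ ^ 2) μ :=
    (integrable_const (1 : ℝ)).congr (hsph.mono fun x hx => by simp [hx])
  have hμ : ¬∀ᵐ x ∂μ, x = 0 := fun h0 => by
    obtain ⟨x, hx0, hx1⟩ := (h0.and hsph).exists
    simp [hx0] at hx1
  have h1J2 : ⟪v₁, J v₂⟫ = 0 := by
    rw [← J.inner_map_map, hJ, inner_neg_right, hJ12, neg_zero]
  set U := Real.cos τ • v₁ - Real.sin τ • J v₂
  have hU : ‖U‖ = ‖v₁‖ := by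
    refine (pow_left_inj₀ (norm_nonneg _) (norm_nonneg _) two_ne_zero).1 ?_
    rw [norm_sub_sq_real, norm_smul, norm_smul, inner_smul_left, inner_smul_right, h1J2,
      J.norm_map, hv₁, hv₂, Real.norm_eq_abs, Real.norm_eq_abs]
    nlinarith [Real.sin_sq_add_cos_sq τ, sq_abs (Real.cos τ), sq_abs (Real.sin τ)]
  have hJU : ‖J U‖ = ‖J v₁‖ := by rw [J.norm_map, J.norm_map, hU]
  have hf : ∀ x, (⟪x, v₁⟫ ^ 2 + ⟪x, J v₁⟫ ^ 2) * Real.cos τ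
      + (⟪x, v₂⟫ * ⟪x, J v₁⟫ - ⟪x, v₁⟫ * ⟪x, J v₂⟫) * Real.sin τ
      = ⟪x, v₁⟫ * ⟪x, U⟫ + ⟪x, J v₁⟫ * ⟪x, J U⟫ := fun x => by
    simp only [U, map_sub, map_smul, hJ, inner_sub_right, inner_smul_right, inner_neg_right]
    ring
  refine ⟨?_, fun heq => ?_, fun hc => ?_⟩
  · simp_rw [hf]
    exact integral_abs_inner_mul_inner_add_le hinv h2 hU hJU
  · simp_rw [hf] at heq
    have hUv₁ : ⟪U, v₁⟫ = Real.cos τ := by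
      rw [inner_sub_left, inner_smul_left, inner_smul_left, real_inner_self_eq_norm_sq,
        real_inner_comm, h1J2, hv₁]
      simp
    rcases eq_or_eq_neg_of_integral_abs_inner_mul_inner_add_eq hinv h2 hμ hU hJU heq with h | h
    · rw [h, real_inner_self_eq_norm_sq, hv₁] at hUv₁
      exact Or.inl (by simpa using hUv₁.symm)
    · rw [h, inner_neg_left, real_inner_self_eq_norm_sq, hv₁] at hUv₁
      exact Or.inr (by linarith)
  · have habs : |Real.cos τ| = 1 := by rcases hc with h | h <;> simp [h]
    refine integral_congr_ae (ae_of_all _ fun x => ?_)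
    simp only [Real.sin_eq_zero_iff_cos_eq.2 hc, mul_zero, add_zero, abs_mul, habs, mul_one]
    exact abs_of_nonneg (by positivity)

/-- For a rotation-invariant probability measure `μ` on `S^{2n-1} ⊆ ℂⁿ`,
orthonormal `v₁, v₂` with `v₂ ⊥ {v₁, Jv₁}`, and `a₁ = ⟨x,v₁⟩, b₁ = ⟨x,Jv₁⟩,
a₂ = ⟨x,v₂⟩, b₂ = ⟨x,Jv₂⟩`:
`∫ |(a₁²+b₁²)cos τ + (a₂b₁ - a₁b₂) sin τ| dμ ≤ ∫ (a₁²+b₁²) dμ`,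
with equality iff `cos τ = ±1`. -/
theorem stmt_18 (n : ℕ)
    (J : EuclideanSpace ℝ (Fin (2 * n)) ≃ₗᵢ[ℝ] EuclideanSpace ℝ (Fin (2 * n)))
    (hJ : ∀ x, J (J x) = -x)
    (v₁ v₂ : EuclideanSpace ℝ (Fin (2 * n)))
    (hv₁ : ‖v₁‖ = 1) (hv₂ : ‖v₂‖ = 1)
    (h12 : ⟪v₁, v₂⟫ = 0) (hJ12 : ⟪J v₁, v₂⟫ = 0)
    (μ : Measure (EuclideanSpace ℝ (Fin (2 * n)))) [IsProbabilityMeasure μ]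
    (hinv : ∀ g : EuclideanSpace ℝ (Fin (2 * n)) ≃ₗᵢ[ℝ] EuclideanSpace ℝ (Fin (2 * n)),
      μ.map g = μ)
    (hsphere : μ (Metric.sphere (0 : EuclideanSpace ℝ (Fin (2 * n))) 1)ᶜ = 0)
    (τ : ℝ) :
    (∫ x, |(⟪x, v₁⟫ ^ 2 + ⟪x, J v₁⟫ ^ 2) * Real.cos τ
          + (⟪x, v₂⟫ * ⟪x, J v₁⟫ - ⟪x, v₁⟫ * ⟪x, J v₂⟫) * Real.sin τ| ∂μ
        ≤ ∫ x, (⟪x, v₁⟫ ^ 2 + ⟪x, J v₁⟫ ^ 2) ∂μ) ∧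
    ((∫ x, |(⟪x, v₁⟫ ^ 2 + ⟪x, J v₁⟫ ^ 2) * Real.cos τ
          + (⟪x, v₂⟫ * ⟪x, J v₁⟫ - ⟪x, v₁⟫ * ⟪x, J v₂⟫) * Real.sin τ| ∂μ
        = ∫ x, (⟪x, v₁⟫ ^ 2 + ⟪x, J v₁⟫ ^ 2) ∂μ)
      ↔ (Real.cos τ = 1 ∨ Real.cos τ = -1)) :=
  stmt_18_general n J hJ v₁ v₂ hv₁ hv₂ hJ12 μ hinv hsphere τ
end
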